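/- arXiv:2008.12407 — 6 statements merged into one kernel-verified Lean document; each statement's English description precedes it below -/
import Mathlib

section
/- Let S be a completely simple finite semigroup with primitive idempotent e, L = E(Se), G = eSe, R = E(eS). The product map ψ : L × G × R → S, ψ(f,g,h) = f·g·h, is a bijection, with inverse z ↦ (ze·(eze)⁻¹, eze, (eze)⁻¹·ez), where inverses are taken in the group G. -/
namespace Stmt5Aux

variable {S : Type*} [Semigroup S]

/-- `sp a n = a^(n+1)` in a semigroup. -/
def sp (a : S) : ℕ → S
  | 0 => a
  | n + 1 => sp a n * a

lemma sp_add (a : S) (m n : ℕ) : sp a (m + n + 1) = sp a m * sp a n := by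
  induction n with
  | zero => rfl
  | succ n ih =>
      have : m + (n + 1) + 1 = (m + n + 1) + 1 := by ring
      rw [this]
      show sp a (m + n + 1) * a = _
      rw [ih]
      show sp a m * sp a n * a = sp a m * (sp a n * a)
      rw [mul_assoc]

lemma sp_comm (a : S) (n : ℕ) : a * sp a n = sp a n * a := by
  induction n with
  | zero => rfl
  | succ n ih =>
      show a * (sp a n * a) = (sp a n * a) * a
      rw [← mul_assoc, ih]

/-- In a finite semigroup, some `sp a n` is idempotent. -/
lemma exists_idem_sp [Fintype S] (a : S) : ∃ n, sp a n * sp a n = sp a n := by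
  obtain ⟨i, j, hne, hij⟩ := Finite.exists_ne_map_eq_of_infinite (sp a)
  wlog hlt : i < j generalizing i j
  · exact this j i hne.symm hij.symm (by omega)
  set p := j - i with hp
  have hp1 : 1 ≤ p := by omega
  have hstep : ∀ d, sp a (i + p + d) = sp a (i + d) := by
    intro d
    cases d with
    | zero =>
        simpa using (by rw [show i + p + 0 = j by omega, ← hij] : sp a (i + p + 0) = sp a i)
    | succ d =>
        have h1 : i + p + (d + 1) = (i + p) + d + 1 := by ring
        have h2 : i + (d + 1) = i + d + 1 := by ring
        rw [h1, h2, sp_add a (i + p) d]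
        have : sp a (i + p) = sp a i := by rw [show i + p = j by omega, ← hij]
        rw [this]
        have := sp_add a i d
        rw [← this]
  have hmul : ∀ k d, sp a (i + d + k * p) = sp a (i + d) := by
    intro k
    induction k with
    | zero => intro d; simp
    | succ k ih =>
        intro d
        have h3 : i + d + (k + 1) * p = i + p + (d + k * p) := by ring
        rw [h3, hstep (d + k * p), show i + (d + k * p) = i + d + k * p by ring, ih d]
  refine ⟨p * (i + 1) - 1, ?_⟩
  set N := p * (i + 1) - 1 with hN
  have hple : 1 ≤ p * (i + 1) := Nat.one_le_iff_ne_zero.mpr (by positivity)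
  have hN1 : N + 1 = p * (i + 1) := by omega
  have hNi : i ≤ N := by nlinarith [Nat.le_mul_of_pos_left (i+1) (show 0 < p by omega)]
  have key : sp a (N + N + 1) = sp a N := by
    have harith : N + N + 1 = i + (N - i) + (i + 1) * p := by
      have : (i+1) * p = p * (i+1) := by ring
      omega
    rw [harith, hmul (i+1) (N - i), show i + (N - i) = N by omega]
  calc sp a N * sp a N = sp a (N + N + 1) := (sp_add a N N).symm
    _ = sp a N := key

variable (e : S)

lemma sp_eSe (z : S) : ∀ n, ∃ s, sp (e * z * e) n = e * s * e := by
  intro n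
  induction n with
  | zero => exact ⟨z, rfl⟩
  | succ n ih =>
      obtain ⟨s, hs⟩ := ih
      refine ⟨s * (e * (e * z)), ?_⟩
      show sp (e * z * e) n * (e * z * e) = _
      rw [hs]
      simp only [mul_assoc]

lemma sp_Se (u : S) : ∀ n, ∃ x, sp (u * e) n = x * e := by
  intro n
  induction n with
  | zero => exact ⟨u, rfl⟩
  | succ n ih =>
      obtain ⟨x, hx⟩ := ih
      refine ⟨x * (e * u), ?_⟩
      show sp (u * e) n * (u * e) = _
      rw [hx]
      simp only [mul_assoc]

lemma sp_eS (u : S) : ∀ n, ∃ x, sp (e * u) n = e * x := by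
  intro n
  induction n with
  | zero => exact ⟨u, rfl⟩
  | succ n ih =>
      obtain ⟨x, hx⟩ := ih
      refine ⟨x * (e * u), ?_⟩
      show sp (e * u) n * (e * u) = _
      rw [hx]
      simp only [mul_assoc]

/-- `eSe` is a group: inverse of `e*z*e`. -/
lemma exists_inv [Fintype S] (he : e * e = e)
    (hprim : ∀ f : S, f * f = f → e * f = f → f * e = f → f = e) (z : S) :
    ∃ w, (∃ t, w = e * t * e) ∧ (e * z * e) * w = e ∧ w * (e * z * e) = e := by
  set a := e * z * e with ha
  obtain ⟨n, hn⟩ := exists_idem_sp a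
  obtain ⟨s, hs⟩ := sp_eSe e z n
  have hle : e * sp a n = sp a n := by
    rw [hs, ← mul_assoc, ← mul_assoc, he]
  have hre : sp a n * e = sp a n := by
    rw [hs, mul_assoc, he]
  have hspn : sp a n = e := hprim _ hn hle hre
  cases n with
  | zero =>
      refine ⟨e, ⟨e, by rw [he, he]⟩, ?_, ?_⟩
      · show a * e = e
        have : a = e := hspn
        rw [this, he]
      · show e * a = e
        have : a = e := hspn
        rw [this, he]
  | succ m =>
      refine ⟨sp a m, sp_eSe e z m, ?_, ?_⟩
      · rw [show (e*z*e) * sp a m = a * sp a m from rfl, sp_comm]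
        exact hspn
      · exact hspn

/-- Left absorption: every `z` satisfies `z = x * e * z` for some `x`. -/
lemma left_absorb [Fintype S]
    (hsimple : ∀ I : Set S, I.Nonempty →
      (∀ s : S, ∀ x ∈ I, s * x ∈ I ∧ x * s ∈ I) → I = Set.univ)
    (he : e * e = e) (z : S) : ∃ x, x * e * z = z := by
  set I : Set S := {c | (∃ u v, c = u * (e * z) * v) ∨ (∃ u, c = u * (e * z)) ∨
      (∃ v, c = (e * z) * v) ∨ c = e * z} with hI
  have hzI : z ∈ I := by
    have := hsimple I ⟨e * z, Or.inr (Or.inr (Or.inr rfl))⟩ ?_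
    · rw [this]; trivial
    · rintro s x (⟨u, v, rfl⟩ | ⟨u, rfl⟩ | ⟨v, rfl⟩ | rfl)
      · exact ⟨Or.inl ⟨s * u, v, by simp only [mul_assoc]⟩,
          Or.inl ⟨u, v * s, by simp only [mul_assoc]⟩⟩
      · exact ⟨Or.inr (Or.inl ⟨s * u, by simp only [mul_assoc]⟩),
          Or.inl ⟨u, s, rfl⟩⟩
      · exact ⟨Or.inl ⟨s, v, by simp only [mul_assoc]⟩,
          Or.inr (Or.inr (Or.inl ⟨v * s, by simp only [mul_assoc]⟩))⟩
      · exact ⟨Or.inr (Or.inl ⟨s, rfl⟩), Or.inr (Or.inr (Or.inl ⟨s, rfl⟩))⟩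
  have case1 : ∀ u v : S, z = u * (e * z) * v → ∃ x, x * e * z = z := by
    intro u v hz
    set α := u * e with hα
    have hz' : z = α * z * v := by
      rw [hα]
      simp only [mul_assoc] at hz ⊢
      exact hz
    have iter : ∀ n, z = sp α n * z * sp v n := by
      intro n
      induction n with
      | zero => exact hz'
      | succ n ih =>
          have ha : sp α (n+1) * z * sp v (n+1) = α * (sp α n * z * sp v n) * v := by
            show sp α n * α * z * (sp v n * v) = _
            rw [← sp_comm]
            simp only [mul_assoc]
          rw [ha, ← ih]
          exact hz'
    obtain ⟨n, hn⟩ := exists_idem_sp v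
    have h1 : z * sp v n = z := by
      calc z * sp v n = sp α n * z * sp v n * sp v n := by rw [← iter n]
        _ = sp α n * z * (sp v n * sp v n) := by simp only [mul_assoc]
        _ = sp α n * z * sp v n := by rw [hn]
        _ = z := (iter n).symm
    have h2 : z = sp α n * z := by
      calc z = sp α n * z * sp v n := iter n
        _ = sp α n * (z * sp v n) := by rw [mul_assoc]
        _ = sp α n * z := by rw [h1]
    obtain ⟨x, hx⟩ := sp_Se e u n
    exact ⟨x, by rw [← hx, ← h2]⟩
  rcases hzI with (⟨u, v, huv⟩ | ⟨u, hu⟩ | ⟨v, hv⟩ | h4)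
  · exact case1 u v huv
  · exact ⟨u, by rw [mul_assoc, ← hu]⟩
  · refine case1 e v ?_
    rw [← mul_assoc, he]
    exact hv
  · exact ⟨e, by rw [mul_assoc, ← h4, ← h4]⟩

/-- Right absorption: every `z` satisfies `z = z * e * y` for some `y`. -/
lemma right_absorb [Fintype S]
    (hsimple : ∀ I : Set S, I.Nonempty →
      (∀ s : S, ∀ x ∈ I, s * x ∈ I ∧ x * s ∈ I) → I = Set.univ)
    (he : e * e = e) (z : S) : ∃ y, z * e * y = z := by
  set I : Set S := {c | (∃ u v, c = u * (z * e) * v) ∨ (∃ u, c = u * (z * e)) ∨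
      (∃ v, c = (z * e) * v) ∨ c = z * e} with hI
  have hzI : z ∈ I := by
    have := hsimple I ⟨z * e, Or.inr (Or.inr (Or.inr rfl))⟩ ?_
    · rw [this]; trivial
    · rintro s x (⟨u, v, rfl⟩ | ⟨u, rfl⟩ | ⟨v, rfl⟩ | rfl)
      · exact ⟨Or.inl ⟨s * u, v, by simp only [mul_assoc]⟩,
          Or.inl ⟨u, v * s, by simp only [mul_assoc]⟩⟩
      · exact ⟨Or.inr (Or.inl ⟨s * u, by simp only [mul_assoc]⟩),
          Or.inl ⟨u, s, rfl⟩⟩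
      · exact ⟨Or.inl ⟨s, v, by simp only [mul_assoc]⟩,
          Or.inr (Or.inr (Or.inl ⟨v * s, by simp only [mul_assoc]⟩))⟩
      · exact ⟨Or.inr (Or.inl ⟨s, rfl⟩), Or.inr (Or.inr (Or.inl ⟨s, rfl⟩))⟩
  have case1 : ∀ u v : S, z = u * (z * e) * v → ∃ y, z * e * y = z := by
    intro u v hz
    set β := e * v with hβ
    have hz' : z = u * (z * β) := by
      rw [hβ]
      simp only [mul_assoc] at hz ⊢
      exact hz
    have iter : ∀ n, z = sp u n * (z * sp β n) := by
      intro n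
      induction n with
      | zero => exact hz'
      | succ n ih =>
          have ha : sp u (n+1) * (z * sp β (n+1)) = u * ((sp u n * (z * sp β n)) * β) := by
            show sp u n * u * (z * (sp β n * β)) = _
            rw [← sp_comm]
            simp only [mul_assoc]
          rw [ha, ← ih]
          exact hz'
    obtain ⟨n, hn⟩ := exists_idem_sp u
    have h1 : sp u n * z = z := by
      calc sp u n * z = sp u n * (sp u n * (z * sp β n)) := by rw [← iter n]
        _ = (sp u n * sp u n) * (z * sp β n) := by simp only [mul_assoc]
        _ = sp u n * (z * sp β n) := by rw [hn]
        _ = z := (iter n).symm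
    have h2 : z = z * sp β n := by
      calc z = sp u n * (z * sp β n) := iter n
        _ = (sp u n * z) * sp β n := by rw [mul_assoc]
        _ = z * sp β n := by rw [h1]
    obtain ⟨y, hy⟩ := sp_eS e v n
    refine ⟨y, ?_⟩
    have : z * sp β n = z * e * y := by rw [hy, ← mul_assoc]
    rw [← this, ← h2]
  rcases hzI with (⟨u, v, huv⟩ | ⟨u, hu⟩ | ⟨v, hv⟩ | h4)
  · exact case1 u v huv
  · refine case1 u e ?_
    have h5 : u * (z * e) * e = u * (z * e) := by simp only [mul_assoc, he]
    rw [h5]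
    exact hu
  · exact ⟨v, by rw [← hv]⟩
  · exact ⟨e, by rw [mul_assoc, he, ← h4]⟩

end Stmt5Aux

open Stmt5Aux in
/-- The product map `ψ : L × G × R → S`, `ψ(f,g,h) = f*g*h`, is a bijection, and its
inverse is `z ↦ (z*e*(e*z*e)⁻¹, e*z*e, (e*z*e)⁻¹*(e*z))`, where `(e*z*e)⁻¹` denotes
the inverse of `e*z*e` in the group `G = eSe` with unit `e`. -/
theorem stmt_5 {S : Type*} [Semigroup S] [Fintype S] [Nonempty S] (e : S)
    (hsimple : ∀ I : Set S, I.Nonempty →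
      (∀ s : S, ∀ x ∈ I, s * x ∈ I ∧ x * s ∈ I) → I = Set.univ)
    (he : e * e = e)
    (hprim : ∀ f : S, f * f = f → e * f = f → f * e = f → f = e) :
    -- injectivity of the product map
    (∀ f ∈ {f : S | f * f = f ∧ ∃ s : S, f = s * e},
     ∀ f' ∈ {f : S | f * f = f ∧ ∃ s : S, f = s * e},
     ∀ g ∈ {x : S | ∃ s : S, x = e * s * e},
     ∀ g' ∈ {x : S | ∃ s : S, x = e * s * e},
     ∀ h ∈ {h : S | h * h = h ∧ ∃ s : S, h = e * s},
     ∀ h' ∈ {h : S | h * h = h ∧ ∃ s : S, h = e * s},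
       f * g * h = f' * g' * h' → f = f' ∧ g = g' ∧ h = h') ∧
    -- surjectivity together with the explicit inverse formula
    (∀ z : S, ∃ w ∈ {x : S | ∃ s : S, x = e * s * e},
      (e * z * e) * w = e ∧ w * (e * z * e) = e ∧
      z * e * w ∈ {f : S | f * f = f ∧ ∃ s : S, f = s * e} ∧
      e * z * e ∈ {x : S | ∃ s : S, x = e * s * e} ∧
      w * (e * z) ∈ {h : S | h * h = h ∧ ∃ s : S, h = e * s} ∧
      (z * e * w) * (e * z * e) * (w * (e * z)) = z) := by
  -- basic facts about idempotents in Se / eS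
  have hfe : ∀ f : S, (∃ s : S, f = s * e) → f * e = f := by
    rintro f ⟨s, rfl⟩
    rw [mul_assoc, he]
  have heh : ∀ h : S, (∃ s : S, h = e * s) → e * h = h := by
    rintro h ⟨s, rfl⟩
    rw [← mul_assoc, he]
  have hef : ∀ f : S, f * f = f → (∃ s : S, f = s * e) → e * f = e := by
    intro f hff hex
    have hfe' := hfe f hex
    refine hprim (e * f) ?_ ?_ ?_
    · have h1 : f * (e * f) = f := by rw [← mul_assoc, hfe', hff]
      rw [mul_assoc e f (e * f), h1]
    · rw [← mul_assoc, he]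
    · rw [mul_assoc, hfe']
  have hhe : ∀ h : S, h * h = h → (∃ s : S, h = e * s) → h * e = e := by
    intro h hhh hex
    have heh' := heh h hex
    refine hprim (h * e) ?_ ?_ ?_
    · have h1 : e * (h * e) = h * e := by rw [← mul_assoc, heh']
      rw [mul_assoc h e (h * e), h1, ← mul_assoc, hhh]
    · rw [← mul_assoc, heh']
    · rw [mul_assoc, he]
  have heg : ∀ g : S, (∃ s : S, g = e * s * e) → e * g = g := by
    rintro g ⟨s, rfl⟩
    rw [← mul_assoc, ← mul_assoc, he]
  have hge : ∀ g : S, (∃ s : S, g = e * s * e) → g * e = g := by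
    rintro g ⟨s, rfl⟩
    rw [mul_assoc (e * s) e e, he]
  constructor
  · -- injectivity
    rintro f ⟨hff, hfs⟩ f' ⟨hff', hfs'⟩ g hgs g' hgs' h ⟨hhh, hhs⟩ h' ⟨hhh', hhs'⟩ heq
    have gmid : ∀ (f g h : S), e * f = e → h * e = e → e * g = g → g * e = g →
        e * (f * g * h) * e = g := by
      intro f g h h1 h2 h3 h4
      calc e * (f * g * h) * e = (e * f) * (g * (h * e)) := by simp only [mul_assoc]
        _ = e * (g * e) := by rw [h1, h2]
        _ = g := by rw [h4, h3]
    have hgg' : g = g' := by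
      rw [← gmid f g h (hef f hff hfs) (hhe h hhh hhs) (heg g hgs) (hge g hgs), heq,
        gmid f' g' h' (hef f' hff' hfs') (hhe h' hhh' hhs') (heg g' hgs') (hge g' hgs')]
    -- inverse of g
    obtain ⟨sg, hgsg⟩ := id hgs
    obtain ⟨wg, _, hgw, hwg⟩ := exists_inv e he hprim sg
    rw [← hgsg] at hgw hwg
    have gleft : ∀ (f g h : S), h * e = e → g * e = g → (f * g * h) * e = f * g := by
      intro f g h h1 h2
      calc (f * g * h) * e = f * (g * (h * e)) := by simp only [mul_assoc]
        _ = f * (g * e) := by rw [h1]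
        _ = f * g := by rw [h2]
    have gright : ∀ (f g h : S), e * f = e → e * g = g → e * (f * g * h) = g * h := by
      intro f g h h1 h2
      calc e * (f * g * h) = (e * f) * (g * h) := by simp only [mul_assoc]
        _ = e * (g * h) := by rw [h1]
        _ = g * h := by rw [← mul_assoc, h2]
    have hfg : f * g = f' * g := by
      rw [← gleft f g h (hhe h hhh hhs) (hge g hgs), heq,
        gleft f' g' h' (hhe h' hhh' hhs') (hge g' hgs'), ← hgg']
    have hgh : g * h = g * h' := by
      rw [← gright f g h (hef f hff hfs) (heg g hgs), heq,
        gright f' g' h' (hef f' hff' hfs') (heg g' hgs'), ← hgg']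
    refine ⟨?_, hgg', ?_⟩
    · calc f = f * e := (hfe f hfs).symm
        _ = f * (g * wg) := by rw [hgw]
        _ = (f * g) * wg := by rw [mul_assoc]
        _ = (f' * g) * wg := by rw [hfg]
        _ = f' * (g * wg) := by rw [mul_assoc]
        _ = f' * e := by rw [hgw]
        _ = f' := hfe f' hfs'
    · calc h = e * h := (heh h hhs).symm
        _ = (wg * g) * h := by rw [hwg]
        _ = wg * (g * h) := by rw [mul_assoc]
        _ = wg * (g * h') := by rw [hgh]
        _ = (wg * g) * h' := by rw [← mul_assoc]
        _ = e * h' := by rw [hwg]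
        _ = h' := heh h' hhs'
  · -- surjectivity
    intro z
    obtain ⟨w, ⟨t, hwt⟩, haw, hwa⟩ := exists_inv e he hprim z
    obtain ⟨x, hx⟩ := left_absorb e hsimple he z
    have hew : e * w = w := by
      rw [hwt, ← mul_assoc, ← mul_assoc, he]
    have hwe : w * e = w := by
      rw [hwt, mul_assoc (e * t) e e, he]
    have h_zew : z * e * w = x * e := by
      rw [← hx]
      calc x * e * z * e * w = x * ((e * z * e) * w) := by simp only [mul_assoc]
        _ = x * e := by rw [haw]
    have e1 : z * e * w = z * w := by rw [mul_assoc, hew]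
    have crux : z * w * z = z := by
      rw [← e1, h_zew]
      exact hx
    have e2 : (e * z) * w = e := by
      rw [← hew, ← mul_assoc]
      exact haw
    have e3 : (z * e * w) * (e * z) = z := by
      rw [h_zew]
      calc x * e * (e * z) = x * (e * e) * z := by simp only [mul_assoc]
        _ = x * e * z := by rw [he]
        _ = z := hx
    refine ⟨w, ⟨t, hwt⟩, haw, hwa, ⟨?_, ?_⟩, ⟨z, rfl⟩, ⟨?_, ?_⟩, ?_⟩
    · -- (z*e*w) idempotent
      show (z * e * w) * (z * e * w) = z * e * w
      rw [e1]
      calc (z * w) * (z * w) = (z * w * z) * w := (mul_assoc (z * w) z w).symm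
        _ = z * w := by rw [crux]
    · exact ⟨z * (e * (e * t)), by rw [hwt]; simp only [mul_assoc]⟩
    · -- (w*(e*z)) idempotent
      show (w * (e * z)) * (w * (e * z)) = w * (e * z)
      calc (w * (e * z)) * (w * (e * z)) = ((w * (e * z)) * w) * (e * z) :=
            (mul_assoc _ _ _).symm
        _ = (w * ((e * z) * w)) * (e * z) := by rw [mul_assoc w (e * z) w]
        _ = (w * e) * (e * z) := by rw [e2]
        _ = w * (e * z) := by rw [hwe]
    · exact ⟨t * (e * (e * z)), by rw [hwt]; simp only [mul_assoc]⟩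
    · -- the product formula
      have step1 : (z * e * w) * (e * z * e) = z * e := by
        calc (z * e * w) * (e * z * e) = (z * e) * (w * (e * z * e)) := by
              simp only [mul_assoc]
          _ = (z * e) * e := by rw [hwa]
          _ = z * e := by rw [mul_assoc, he]
      calc (z * e * w) * (e * z * e) * (w * (e * z))
          = (z * e) * (w * (e * z)) := by rw [step1]
        _ = (z * e * w) * (e * z) := by simp only [mul_assoc]
        _ = z := e3
end

section
/- If μ is a probability measure on a finite semigroup S with μ*μ = μ, then the support 𝒮(μ) is a subsemigroup of S. -/
open scoped Classical

/-- Convolution of two probability mass functions on a finite semigroup. -/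
noncomputable def semigroupConv {S : Type*} [Semigroup S] [Fintype S]
    (μ ν : S → ℝ) : S → ℝ :=
  fun x => ∑ f : S, ∑ g : S, if f * g = x then μ f * ν g else 0

theorem mul_le_semigroupConv_mul {S : Type*} [Semigroup S] [Fintype S] {μ ν : S → ℝ}
    (hμ : ∀ s, 0 ≤ μ s) (hν : ∀ s, 0 ≤ ν s) (f g : S) :
    μ f * ν g ≤ semigroupConv μ ν (f * g) := by
  have summand_nonneg : ∀ a b : S, 0 ≤ if a * b = f * g then μ a * ν b else 0 := fun a b => by
    split_ifs
    exacts [mul_nonneg (hμ a) (hν b), le_rfl]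
  calc μ f * ν g = if f * g = f * g then μ f * ν g else 0 := (if_pos rfl).symm
    _ ≤ ∑ b : S, if f * b = f * g then μ f * ν b else 0 :=
      Finset.single_le_sum (fun b _ => summand_nonneg f b) (Finset.mem_univ g)
    _ ≤ semigroupConv μ ν (f * g) :=
      Finset.single_le_sum (fun a _ => Finset.sum_nonneg fun b _ => summand_nonneg a b)
        (Finset.mem_univ f)

theorem stmt_10_general {S : Type*} [Semigroup S] [Fintype S]
    (μ : S → ℝ) (hμ0 : ∀ s, 0 ≤ μ s)
    (hidem : semigroupConv μ μ = μ) :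
    ∀ f g : S, 0 < μ f → 0 < μ g → 0 < μ (f * g) := fun f g hf hg =>
  calc 0 < μ f * μ g := mul_pos hf hg
    _ ≤ semigroupConv μ μ (f * g) := mul_le_semigroupConv_mul hμ0 hμ0 f g
    _ = μ (f * g) := congrFun hidem (f * g)

/-- If `μ` is an idempotent probability (`μ*μ = μ`) on a finite semigroup, then its
support `𝒮(μ)` is a subsemigroup. -/
theorem stmt_10 {S : Type*} [Semigroup S] [Fintype S]
    (μ : S → ℝ) (hμ0 : ∀ s, 0 ≤ μ s) (hμ1 : ∑ s : S, μ s = 1)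
    (hidem : semigroupConv μ μ = μ) :
    ∀ f g : S, 0 < μ f → 0 < μ g → 0 < μ (f * g) :=
  stmt_10_general μ hμ0 hidem
end

section
/- Let μ be an idempotent probability measure (μ*μ = μ) on a finite semigroup S, with support K = 𝒮(μ) completely simple, e an idempotent of K, and Rees decomposition K = LGR at e. Then the pushforward of μ under the G-coordinate map z ↦ eze is the uniform (Haar) probability on the group G = eKe. -/
open scoped Classical

/-!
Idempotence `μ = μ ⋆ μ` makes the support `K` of `μ` a simple semigroup, and a maximum principle
for `k ↦ μ ⋆ δ_k ⋆ μ` upgrades it to `μ = μ ⋆ δ_k ⋆ μ` for every `k ∈ K`. Hence `G = eKe` is a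
finite group with identity `e`, and since `e (x h y) e = (exe) h (eye)` for `h ∈ G`, the image `ν`
of `μ` under `z ↦ eze` satisfies `ν = ν ⋆ δ_h ⋆ ν` for every `h ∈ G`. Averaging over `h ∈ G`,
where `h ↦ a h b` is a bijection, gives `|G| ν(g) = 1` for all `g ∈ G`.
-/

open Finset

theorem eq_of_sum_mul_eq_of_le {ι : Type*} [Fintype ι] {w f : ι → ℝ} {M : ℝ}
    (hw0 : ∀ i, 0 ≤ w i) (hw1 : ∑ i, w i = 1) (hf : ∀ i, 0 < w i → f i ≤ M)
    (hsum : ∑ i, w i * f i = M) {i : ι} (hi : 0 < w i) : f i = M := by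
  have hgap : ∑ j, w j * (M - f j) = 0 := by
    simp only [mul_sub, sum_sub_distrib, ← sum_mul, hw1, hsum, one_mul, sub_self]
  have hgap_nonneg : ∀ j ∈ univ, 0 ≤ w j * (M - f j) := fun j _ => by
    rcases (hw0 j).eq_or_lt with hj | hj
    · rw [← hj, zero_mul]
    · exact mul_nonneg hj.le (sub_nonneg.2 (hf j hj))
  have hi_gap := (sum_eq_zero_iff_of_nonneg hgap_nonneg).1 hgap i (mem_univ i)
  linarith [(mul_eq_zero.1 hi_gap).resolve_left hi.ne']

section

variable {S : Type*} [Semigroup S] [Fintype S]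

/-- The integral of `F` against `μ ⋆ δ_k ⋆ μ`. -/
noncomputable def sandwichIntegral (μ F : S → ℝ) (k : S) : ℝ :=
  ∑ x, ∑ y, μ x * μ y * F (x * k * y)

structure IsIdempotentProb (μ : S → ℝ) : Prop where
  nonneg : ∀ s, 0 ≤ μ s
  sum_eq_one : ∑ s, μ s = 1
  conv_self : semigroupConv μ μ = μ

variable {μ : S → ℝ}

namespace IsIdempotentProb

theorem sum_mul_eq_sum_sum_mul (hμ : IsIdempotentProb μ) (F : S → ℝ) :
    ∑ s, μ s * F s = ∑ p, ∑ q, μ p * μ q * F (p * q) := by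
  conv_lhs => rw [← hμ.conv_self]
  simp only [semigroupConv, sum_mul, ite_mul, zero_mul]
  rw [sum_comm]
  refine sum_congr rfl fun p _ => ?_
  rw [sum_comm]
  refine sum_congr rfl fun q _ => ?_
  rw [sum_ite_eq]
  simp

theorem mul_pos (hμ : IsIdempotentProb μ) {x y : S} (hx : 0 < μ x) (hy : 0 < μ y) :
    0 < μ (x * y) := by
  have h := hμ.sum_mul_eq_sum_sum_mul fun s => if s = x * y then 1 else 0
  simp only [mul_ite, mul_one, mul_zero, sum_ite_eq', mem_univ, if_true] at h
  have hterm : ∀ p q, 0 ≤ if p * q = x * y then μ p * μ q else 0 := fun p q => by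
    split_ifs
    · exact mul_nonneg (hμ.nonneg p) (hμ.nonneg q)
    · exact le_rfl
  calc 0 < μ x * μ y := _root_.mul_pos hx hy
    _ = if x * y = x * y then μ x * μ y else 0 := (if_pos rfl).symm
    _ ≤ ∑ q, if x * q = x * y then μ x * μ q else 0 :=
      single_le_sum (fun q _ => hterm x q) (mem_univ y)
    _ ≤ ∑ p, ∑ q, if p * q = x * y then μ p * μ q else 0 :=
      single_le_sum (f := fun p => ∑ q, if p * q = x * y then μ p * μ q else 0)
        (fun p _ => sum_nonneg fun q _ => hterm p q) (mem_univ x)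
    _ = μ (x * y) := h.symm

/-- The mass `c` of the complement of the ideal satisfies `c ≤ c ^ 2` by idempotence, and
`c < 1`. -/
theorem mem_of_isIdeal (hμ : IsIdempotentProb μ) (I : Set S)
    (hI : ∀ p q, 0 < μ p → 0 < μ q → p ∈ I ∨ q ∈ I → p * q ∈ I)
    {k : S} (hk : 0 < μ k) (hkI : k ∈ I) {z : S} (hz : 0 < μ z) : z ∈ I := by
  set c := ∑ s, μ s * if s ∈ I then 0 else 1 with hc
  have hc_sq : c ≤ c * c := by
    rw [hc, sum_mul_sum, hμ.sum_mul_eq_sum_sum_mul]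
    refine sum_le_sum fun p _ => sum_le_sum fun q _ => ?_
    rcases (hμ.nonneg p).eq_or_lt with hp | hp
    · simp [← hp]
    rcases (hμ.nonneg q).eq_or_lt with hq | hq
    · simp [← hq]
    by_cases hpI : p ∈ I
    · simp [hpI, hI p q hp hq (Or.inl hpI)]
    by_cases hqI : q ∈ I
    · simp [hqI, hI p q hp hq (Or.inr hqI)]
    simp only [hpI, hqI, if_false, mul_one]
    split_ifs
    · simpa using (_root_.mul_pos hp hq).le
    · simp
  have hc_nonneg : ∀ s ∈ univ, 0 ≤ μ s * if s ∈ I then 0 else 1 := fun s _ =>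
    mul_nonneg (hμ.nonneg s) (by split_ifs <;> norm_num)
  have hc_lt : c < 1 := by
    have hsplit : c + ∑ s, μ s * (if s ∈ I then 1 else 0) = 1 := by
      rw [hc, ← sum_add_distrib]
      convert hμ.sum_eq_one using 2 with s
      split_ifs <;> ring
    have : μ k ≤ ∑ s, μ s * (if s ∈ I then 1 else 0) := by
      simpa [hkI] using single_le_sum (f := fun s => μ s * if s ∈ I then (1 : ℝ) else 0)
        (fun s _ => mul_nonneg (hμ.nonneg s) (by split_ifs <;> norm_num)) (mem_univ k)
    linarith
  have hc_zero : c = 0 := by nlinarith [sum_nonneg hc_nonneg]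
  by_contra hzI
  have := single_le_sum hc_nonneg (mem_univ z)
  simp only [hzI, if_false, mul_one] at this
  linarith

theorem exists_mul_mul_eq (hμ : IsIdempotentProb μ) {k z : S} (hk : 0 < μ k) (hz : 0 < μ z) :
    ∃ a b, 0 < μ a ∧ 0 < μ b ∧ a * k * b = z := by
  refine hμ.mem_of_isIdeal {w | ∃ a b, 0 < μ a ∧ 0 < μ b ∧ a * k * b = w} ?_
    (hμ.mul_pos (hμ.mul_pos hk hk) hk) ⟨k, k, hk, hk, rfl⟩ hz
  rintro p q hp hq (⟨a, b, ha, hb, rfl⟩ | ⟨a, b, ha, hb, rfl⟩)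
  · exact ⟨a, b * q, ha, hμ.mul_pos hb hq, by simp only [mul_assoc]⟩
  · exact ⟨p * a, b, hμ.mul_pos hp ha, hb, by simp only [mul_assoc]⟩

theorem sum_mul_eq_sum_mul_sandwichIntegral (hμ : IsIdempotentProb μ) (F : S → ℝ) :
    ∑ s, μ s * F s = ∑ k, μ k * sandwichIntegral μ F k := by
  calc ∑ s, μ s * F s = ∑ p, μ p * ∑ q, μ q * F (p * q) := by
        rw [hμ.sum_mul_eq_sum_sum_mul]; simp only [mul_sum, mul_assoc]
    _ = ∑ x, ∑ k, μ x * μ k * ∑ y, μ y * F (x * k * y) := hμ.sum_mul_eq_sum_sum_mul _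
    _ = ∑ k, μ k * sandwichIntegral μ F k := by
        rw [sum_comm]
        simp only [sandwichIntegral, mul_sum]
        exact sum_congr rfl fun k _ => sum_congr rfl fun x _ => sum_congr rfl fun y _ => by ring

theorem sandwichIntegral_eq_sum_sum (hμ : IsIdempotentProb μ) (F : S → ℝ) (k : S) :
    sandwichIntegral μ F k =
      ∑ a, ∑ b, μ a * μ b * sandwichIntegral μ F (a * k * b) := by
  calc sandwichIntegral μ F k = ∑ x, μ x * ∑ y, μ y * F (x * k * y) := by
        simp only [sandwichIntegral, mul_sum, mul_assoc]
    _ = ∑ x, ∑ a, μ x * μ a * ∑ y, μ y * F (x * a * k * y) := by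
        rw [hμ.sum_mul_eq_sum_sum_mul]
    _ = ∑ x, ∑ a, μ x * μ a * ∑ b, ∑ y, μ b * μ y * F (x * a * k * (b * y)) := by
        simp only [hμ.sum_mul_eq_sum_sum_mul fun y => F (_ * y)]
    _ = ∑ a, ∑ b, μ a * μ b * sandwichIntegral μ F (a * k * b) := by
        rw [sum_comm]
        simp only [sandwichIntegral, mul_sum]
        refine sum_congr rfl fun a _ => ?_
        rw [sum_comm]
        exact sum_congr rfl fun b _ => sum_congr rfl fun x _ => sum_congr rfl fun y _ => by
          simp only [mul_assoc]; ring

/-- Maximum principle: by `sandwichIntegral_eq_sum_sum`, the value at a maximiser `k₀` on the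
support is attained at every `a * k₀ * b`, which by simplicity is the whole support. -/
theorem sandwichIntegral_eq_of_pos (hμ : IsIdempotentProb μ) (F : S → ℝ) {k k' : S}
    (hk : 0 < μ k) (hk' : 0 < μ k') : sandwichIntegral μ F k = sandwichIntegral μ F k' := by
  obtain ⟨k₀, hk₀, hmax⟩ := (univ.filter (0 < μ ·)).exists_max_image (sandwichIntegral μ F)
    ⟨k, by simpa using hk⟩
  rw [mem_filter] at hk₀
  have hspread : ∀ a b, 0 < μ a → 0 < μ b →
      sandwichIntegral μ F (a * k₀ * b) = sandwichIntegral μ F k₀ := fun a b ha hb =>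
    eq_of_sum_mul_eq_of_le (w := fun p : S × S => μ p.1 * μ p.2)
      (f := fun p => sandwichIntegral μ F (p.1 * k₀ * p.2))
      (fun p => mul_nonneg (hμ.nonneg _) (hμ.nonneg _))
      (by rw [Fintype.sum_prod_type]; simp [← mul_sum, hμ.sum_eq_one])
      (fun p hp => hmax _ (by
        simpa using hμ.mul_pos (hμ.mul_pos (pos_of_mul_pos_left hp (hμ.nonneg _)) hk₀.2)
          (pos_of_mul_pos_right hp (hμ.nonneg _))))
      (by rw [Fintype.sum_prod_type, ← hμ.sandwichIntegral_eq_sum_sum])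
      (i := (a, b)) (_root_.mul_pos ha hb)
  have hall : ∀ k, 0 < μ k → sandwichIntegral μ F k = sandwichIntegral μ F k₀ := fun k hk => by
    obtain ⟨a, b, ha, hb, rfl⟩ := hμ.exists_mul_mul_eq hk₀.2 hk
    exact hspread a b ha hb
  rw [hall k hk, hall k' hk']

theorem sandwichIntegral_eq_sum_mul (hμ : IsIdempotentProb μ) (F : S → ℝ) {k : S}
    (hk : 0 < μ k) : sandwichIntegral μ F k = ∑ s, μ s * F s := by
  rw [hμ.sum_mul_eq_sum_mul_sandwichIntegral]
  calc sandwichIntegral μ F k = ∑ k', μ k' * sandwichIntegral μ F k := by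
        rw [← sum_mul, hμ.sum_eq_one, one_mul]
    _ = ∑ k', μ k' * sandwichIntegral μ F k' := sum_congr rfl fun k' _ => by
        rcases (hμ.nonneg k').eq_or_lt with hk' | hk'
        · rw [← hk', zero_mul, zero_mul]
        · rw [hμ.sandwichIntegral_eq_of_pos F hk hk']

end IsIdempotentProb

noncomputable def localGroup (μ : S → ℝ) (e : S) : Finset S :=
  univ.filter fun x => ∃ z, 0 < μ z ∧ x = e * z * e

variable {e : S}

theorem mem_localGroup {x : S} : x ∈ localGroup μ e ↔ ∃ z, 0 < μ z ∧ x = e * z * e := by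
  simp [localGroup]

theorem self_mem_localGroup (he : e * e = e) (heK : 0 < μ e) : e ∈ localGroup μ e :=
  mem_localGroup.2 ⟨e, heK, by rw [he, he]⟩

theorem idem_mul_eq_of_mem_localGroup (he : e * e = e) {g : S} (hg : g ∈ localGroup μ e) :
    e * g = g := by
  obtain ⟨z, -, rfl⟩ := mem_localGroup.1 hg
  rw [← mul_assoc, ← mul_assoc, he]

theorem mul_idem_eq_of_mem_localGroup (he : e * e = e) {g : S} (hg : g ∈ localGroup μ e) :
    g * e = g := by
  obtain ⟨z, -, rfl⟩ := mem_localGroup.1 hg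
  rw [mul_assoc, he]

theorem sum_ite_eq_zero_of_not_mem_localGroup (hμ0 : ∀ s, 0 ≤ μ s) {g : S}
    (hg : g ∉ localGroup μ e) : ∑ z, (if e * z * e = g then μ z else 0) = 0 := by
  refine sum_eq_zero fun z _ => ?_
  split_ifs with hz
  · refine ((hμ0 z).eq_or_lt.resolve_right fun hz' => hg ?_).symm
    exact mem_localGroup.2 ⟨z, hz', hz.symm⟩
  · rfl

theorem idem_mul_mul_mul_idem_eq (he : e * e = e) {h : S} (hh : h ∈ localGroup μ e) (x y : S) :
    e * (x * h * y) * e = (e * x * e) * h * (e * y * e) := by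
  conv_lhs => rw [← idem_mul_eq_of_mem_localGroup he hh, ← mul_idem_eq_of_mem_localGroup he hh]
  simp only [mul_assoc]

namespace IsIdempotentProb

theorem pos_of_mem_localGroup (hμ : IsIdempotentProb μ) (heK : 0 < μ e) {g : S}
    (hg : g ∈ localGroup μ e) : 0 < μ g := by
  obtain ⟨z, hz, rfl⟩ := mem_localGroup.1 hg
  exact hμ.mul_pos (hμ.mul_pos heK hz) heK

theorem mul_mem_localGroup (hμ : IsIdempotentProb μ) (he : e * e = e) (heK : 0 < μ e)
    {g h : S} (hg : g ∈ localGroup μ e) (hh : h ∈ localGroup μ e) : g * h ∈ localGroup μ e := by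
  obtain ⟨z, hz, rfl⟩ := mem_localGroup.1 hg
  obtain ⟨w, hw, rfl⟩ := mem_localGroup.1 hh
  refine mem_localGroup.2 ⟨z * e * w, hμ.mul_pos (hμ.mul_pos hz heK) hw, ?_⟩
  simp only [mul_assoc, ← mul_assoc e e, he]

/-- The finite monoid `localGroup μ e` is Dedekind-finite: `m ↦ u * m` is injective on it,
hence surjective, and the preimage of `e` must be `c`. -/
theorem mul_eq_symm_of_mem_localGroup (hμ : IsIdempotentProb μ) (he : e * e = e)
    (heK : 0 < μ e) {u c : S} (hu : u ∈ localGroup μ e) (hc : c ∈ localGroup μ e)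
    (hcu : c * u = e) : u * c = e := by
  have hinj : Set.InjOn (u * ·) (localGroup μ e) := fun m hm m' hm' hmm' => by
    have := congrArg (c * ·) hmm'
    simpa only [← mul_assoc, hcu, idem_mul_eq_of_mem_localGroup he hm,
      idem_mul_eq_of_mem_localGroup he hm'] using this
  obtain ⟨m, hm, hme⟩ := surj_on_of_inj_on_of_card_le (s := localGroup μ e)
    (t := localGroup μ e) (fun m hm => u * m) (fun m hm => hμ.mul_mem_localGroup he heK hu hm)
    (fun m m' hm hm' => hinj hm hm') le_rfl e (self_mem_localGroup he heK)
  have hmc : m = c := by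
    have := congrArg (c * ·) hme
    simpa only [← mul_assoc, hcu, idem_mul_eq_of_mem_localGroup he hm,
      mul_idem_eq_of_mem_localGroup he hc] using this.symm
  rw [hme, hmc]

theorem exists_inv_of_mem_localGroup (hμ : IsIdempotentProb μ) (he : e * e = e)
    (heK : 0 < μ e) {g : S} (hg : g ∈ localGroup μ e) :
    ∃ g' ∈ localGroup μ e, g * g' = e ∧ g' * g = e := by
  obtain ⟨a, b, ha, hb, hab⟩ := hμ.exists_mul_mul_eq (hμ.pos_of_mem_localGroup heK hg) heK
  set l := e * a * e
  set r := e * b * e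
  have hl : l ∈ localGroup μ e := mem_localGroup.2 ⟨a, ha, rfl⟩
  have hr : r ∈ localGroup μ e := mem_localGroup.2 ⟨b, hb, rfl⟩
  have hlgr : l * g * r = e := calc
    l * g * r = e * (a * (e * g * e) * b) * e := by simp only [l, r, mul_assoc]
    _ = e := by
      rw [idem_mul_eq_of_mem_localGroup he hg, mul_idem_eq_of_mem_localGroup he hg, hab, he, he]
  have hright : g * r * l = e :=
    hμ.mul_eq_symm_of_mem_localGroup he heK (hμ.mul_mem_localGroup he heK hg hr) hl
      (by rw [← mul_assoc, hlgr])
  have hleft : r * (l * g) = e :=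
    hμ.mul_eq_symm_of_mem_localGroup he heK hr (hμ.mul_mem_localGroup he heK hl hg) hlgr
  exact ⟨r * l, hμ.mul_mem_localGroup he heK hr hl, by rw [← mul_assoc, hright],
    by rw [mul_assoc, hleft]⟩

theorem sum_localGroup_ite_mul_mul_eq_one (hμ : IsIdempotentProb μ) (he : e * e = e)
    (heK : 0 < μ e) {a b g : S} (ha : a ∈ localGroup μ e) (hb : b ∈ localGroup μ e)
    (hg : g ∈ localGroup μ e) :
    ∑ h ∈ localGroup μ e, (if a * h * b = g then 1 else 0 : ℝ) = 1 := by
  obtain ⟨a', ha', haa', ha'a⟩ := hμ.exists_inv_of_mem_localGroup he heK ha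
  obtain ⟨b', hb', hbb', hb'b⟩ := hμ.exists_inv_of_mem_localGroup he heK hb
  have hsolve : ∀ h ∈ localGroup μ e, a * h * b = g ↔ h = a' * g * b' := fun h hh => by
    constructor
    · rintro rfl
      simp only [← mul_assoc, ha'a, idem_mul_eq_of_mem_localGroup he hh]
      rw [mul_assoc, hbb', mul_idem_eq_of_mem_localGroup he hh]
    · rintro rfl
      simp only [← mul_assoc, haa', idem_mul_eq_of_mem_localGroup he hg]
      rw [mul_assoc, hb'b, mul_idem_eq_of_mem_localGroup he hg]
  rw [sum_congr rfl fun h hh => if_congr (hsolve h hh) rfl rfl, sum_ite_eq',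
    if_pos (hμ.mul_mem_localGroup he heK (hμ.mul_mem_localGroup he heK ha' hg) hb')]

theorem sum_ite_eq_one_div_card_of_mem_localGroup (hμ : IsIdempotentProb μ) (he : e * e = e)
    (heK : 0 < μ e) {g : S} (hg : g ∈ localGroup μ e) :
    ∑ z, (if e * z * e = g then μ z else 0) = 1 / (localGroup μ e).card := by
  set ν := ∑ z, (if e * z * e = g then μ z else 0)
  have hsandwich : ∀ h ∈ localGroup μ e,
      ν = ∑ x, ∑ y, μ x * μ y * (if (e * x * e) * h * (e * y * e) = g then 1 else 0) := by
    intro h hh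
    rw [show ν = ∑ z, μ z * if e * z * e = g then 1 else 0 from
        sum_congr rfl fun z _ => (mul_boole _ _).symm,
      ← hμ.sandwichIntegral_eq_sum_mul _ (hμ.pos_of_mem_localGroup heK hh), sandwichIntegral]
    simp only [idem_mul_mul_mul_idem_eq he hh]
  have hcount : ∀ x y, μ x * μ y *
      ∑ h ∈ localGroup μ e, (if (e * x * e) * h * (e * y * e) = g then 1 else 0 : ℝ) =
        μ x * μ y := fun x y => by
    rcases (hμ.nonneg x).eq_or_lt with hx | hx
    · simp [← hx]
    rcases (hμ.nonneg y).eq_or_lt with hy | hy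
    · simp [← hy]
    rw [hμ.sum_localGroup_ite_mul_mul_eq_one he heK (mem_localGroup.2 ⟨x, hx, rfl⟩)
      (mem_localGroup.2 ⟨y, hy, rfl⟩) hg, mul_one]
  refine eq_one_div_of_mul_eq_one_right ?_
  calc (localGroup μ e).card * ν = ∑ h ∈ localGroup μ e, ν := by rw [sum_const, nsmul_eq_mul]
    _ = ∑ x, ∑ y, μ x * μ y *
        ∑ h ∈ localGroup μ e, (if (e * x * e) * h * (e * y * e) = g then 1 else 0 : ℝ) := by
      rw [sum_congr rfl hsandwich, sum_comm]
      refine sum_congr rfl fun x _ => ?_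
      rw [sum_comm]
      simp only [mul_sum]
    _ = 1 := by simp only [hcount, ← mul_sum, ← sum_mul, hμ.sum_eq_one, one_mul]

end IsIdempotentProb

end

/-- Let `μ` be an idempotent probability on a finite semigroup `S`, with support
`K = 𝒮(μ)`, and `e ∈ K` an idempotent.  Then the pushforward of `μ` under the
`G`-coordinate map `z ↦ e*z*e` is the uniform (Haar) probability on the group
`G = eKe`. -/
theorem stmt_11 {S : Type*} [Semigroup S] [Fintype S]
    (μ : S → ℝ) (hμ0 : ∀ s, 0 ≤ μ s) (hμ1 : ∑ s : S, μ s = 1)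
    (hidem : semigroupConv μ μ = μ)
    (e : S) (he : e * e = e) (heK : 0 < μ e) :
    ∀ g : S,
      (∑ z : S, if e * z * e = g then μ z else 0) =
        if g ∈ Finset.univ.filter (fun x : S => ∃ z, 0 < μ z ∧ x = e * z * e) then
          (1 : ℝ) / (Finset.univ.filter (fun x : S => ∃ z, 0 < μ z ∧ x = e * z * e)).card
        else 0 := by
  intro g
  change _ = if g ∈ localGroup μ e then 1 / ((localGroup μ e).card : ℝ) else 0
  split_ifs with hg
  · exact IsIdempotentProb.sum_ite_eq_one_div_card_of_mem_localGroup ⟨hμ0, hμ1, hidem⟩ he heK hg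
  · exact sum_ite_eq_zero_of_not_mem_localGroup hμ0 hg
end

section
/- Let μ be an idempotent probability measure on a finite semigroup with completely simple support K = LGR (Rees decomposition at an idempotent e). Then μ factorizes as μ = μ^L * ω_G * μ^R, where μ^L and μ^R are the pushforwards of μ under the L- and R-coordinate maps and ω_G is the uniform probability on G. Equivalently, if Z is a random element with law μ, its Rees coordinates Z^L, Z^G, Z^R are independent and Z^G is uniform on G. -/
open scoped Classical

section Aux

variable {S : Type*} [Semigroup S] [Fintype S] (μ : S → ℝ)

lemma conv_term_nonneg (hμ0 : ∀ s, 0 ≤ μ s) (x f g : S) :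
    0 ≤ if f * g = x then μ f * μ g else 0 := by
  split
  · exact mul_nonneg (hμ0 f) (hμ0 g)
  · exact le_refl 0

lemma conv_pos (hμ0 : ∀ s, 0 ≤ μ s) (hidem : semigroupConv μ μ = μ) :
    ∀ a b : S, 0 < μ a → 0 < μ b → 0 < μ (a * b) := by
  intro a b ha hb
  have h1 : μ (a * b) = ∑ f : S, ∑ g : S, if f * g = a * b then μ f * μ g else 0 :=
    (congrFun hidem (a * b)).symm
  rw [h1]
  have hterm : 0 < ∑ g : S, if a * g = a * b then μ a * μ g else 0 := by
    have hle : μ a * μ b ≤ ∑ g : S, if a * g = a * b then μ a * μ g else 0 := by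
      have := Finset.single_le_sum (f := fun g => if a * g = a * b then μ a * μ g else 0)
        (fun g _ => conv_term_nonneg μ hμ0 (a*b) a g) (Finset.mem_univ b)
      simpa using this
    exact lt_of_lt_of_le (mul_pos ha hb) hle
  have hle2 : (∑ g : S, if a * g = a * b then μ a * μ g else 0) ≤
      ∑ f : S, ∑ g : S, if f * g = a * b then μ f * μ g else 0 :=
    Finset.single_le_sum (f := fun f => ∑ g : S, if f * g = a * b then μ f * μ g else 0)
      (fun f _ => Finset.sum_nonneg fun g _ => conv_term_nonneg μ hμ0 (a*b) f g)
      (Finset.mem_univ a)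
  exact lt_of_lt_of_le hterm hle2

/-- Every element of the support lies in `K u K` for any support element `u`:
the support is a simple semigroup. -/
lemma simpleK (hμ0 : ∀ s, 0 ≤ μ s) (hμ1 : ∑ s : S, μ s = 1)
    (hidem : semigroupConv μ μ = μ) :
    ∀ u : S, 0 < μ u → ∀ z : S, 0 < μ z →
      ∃ a b : S, 0 < μ a ∧ 0 < μ b ∧ a * u * b = z := by
  intro u hu
  set I : Finset S := Finset.univ.filter
    (fun z => ∃ a b : S, 0 < μ a ∧ 0 < μ b ∧ a * u * b = z) with hI
  have memI : ∀ z : S, z ∈ I ↔ ∃ a b : S, 0 < μ a ∧ 0 < μ b ∧ a * u * b = z := by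
    intro z; simp [hI]
  -- I ⊆ K
  have IposK : ∀ z ∈ I, 0 < μ z := by
    intro z hz
    rcases (memI z).1 hz with ⟨a, b, ha, hb, hab⟩
    have := conv_pos μ hμ0 hidem (a * u) b
      (conv_pos μ hμ0 hidem a u ha hu) hb
    rwa [hab] at this
  -- ideal property
  have ideal_left : ∀ z ∈ I, ∀ b : S, 0 < μ b → z * b ∈ I := by
    intro z hz b hb
    rcases (memI z).1 hz with ⟨a, b', ha, hb', hab⟩
    refine (memI _).2 ⟨a, b' * b, ha, conv_pos μ hμ0 hidem b' b hb' hb, ?_⟩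
    rw [← hab]; simp [mul_assoc]
  have ideal_right : ∀ z ∈ I, ∀ a : S, 0 < μ a → a * z ∈ I := by
    intro z hz a ha
    rcases (memI z).1 hz with ⟨a', b, ha', hb, hab⟩
    refine (memI _).2 ⟨a * a', b, conv_pos μ hμ0 hidem a a' ha ha', hb, ?_⟩
    rw [← hab, ← mul_assoc, ← mul_assoc]
  set t : ℝ := ∑ z ∈ I, μ z with ht
  have ht_pos : 0 < t := by
    have huuu : u * u * u ∈ I := (memI _).2 ⟨u, u, hu, hu, rfl⟩
    have : 0 < μ (u * u * u) := IposK _ huuu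
    have hle : μ (u * u * u) ≤ t :=
      Finset.single_le_sum (fun z _ => hμ0 z) huuu
    linarith
  have ht_le : t ≤ 1 := by
    rw [ht, ← hμ1]
    exact Finset.sum_le_sum_of_subset_of_nonneg (Finset.subset_univ I)
      (fun z _ _ => hμ0 z)
  -- t ≥ t + (1 - t) * t
  have key : t + (1 - t) * t ≤ t := by
    have hconv : t = ∑ a : S, ∑ b : S, if a * b ∈ I then μ a * μ b else 0 := by
      rw [ht]
      have : ∀ z ∈ I, μ z = ∑ a : S, ∑ b : S, if a * b = z then μ a * μ b else 0 :=
        fun z _ => (congrFun hidem z).symm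
      rw [Finset.sum_congr rfl this, Finset.sum_comm]
      refine Finset.sum_congr rfl fun a _ => ?_
      rw [Finset.sum_comm]
      refine Finset.sum_congr rfl fun b _ => ?_
      rw [Finset.sum_ite_eq I (a*b) (fun _ => μ a * μ b)]
    have hsplit : t + (1 - t) * t ≤ ∑ a : S, ∑ b : S, if a * b ∈ I then μ a * μ b else 0 := by
      have hbound : ∀ a : S, ∀ b : S,
          (if a ∈ I then μ a * μ b else if b ∈ I then μ a * μ b else 0) ≤
          (if a * b ∈ I then μ a * μ b else 0) := by
        intro a b
        by_cases hma : 0 < μ a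
        · by_cases hmb : 0 < μ b
          · by_cases haI : a ∈ I
            · rw [if_pos haI, if_pos (ideal_left a haI b hmb)]
            · rw [if_neg haI]
              by_cases hbI : b ∈ I
              · rw [if_pos hbI, if_pos (ideal_right b hbI a hma)]
              · rw [if_neg hbI]
                split
                · exact mul_nonneg (hμ0 a) (hμ0 b)
                · exact le_refl 0
          · have hb0 : μ b = 0 := le_antisymm (not_lt.1 hmb) (hμ0 b)
            have : ∀ (c : Prop) [Decidable c], (if c then μ a * μ b else 0) ≤
                (if a * b ∈ I then μ a * μ b else 0) := by
              intro c _
              simp [hb0]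
            split
            · simp [hb0]
            · split
              · simp [hb0]
              · split <;> simp [hb0]
        · have ha0 : μ a = 0 := le_antisymm (not_lt.1 hma) (hμ0 a)
          split
          · simp [ha0]
          · split
            · simp [ha0]
            · split <;> simp [ha0]
      calc t + (1 - t) * t
          = ∑ a : S, ∑ b : S, (if a ∈ I then μ a * μ b else if b ∈ I then μ a * μ b else 0) := by
            have expand : ∀ a : S,
                (∑ b : S, (if a ∈ I then μ a * μ b else if b ∈ I then μ a * μ b else 0)) =
                if a ∈ I then μ a else μ a * t := by
              intro a
              by_cases haI : a ∈ I
              · simp only [if_pos haI]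
                rw [← Finset.mul_sum, hμ1, mul_one]
              · simp only [if_neg haI]
                rw [ht]
                rw [Finset.sum_ite_mem, Finset.univ_inter, Finset.mul_sum]
            rw [Finset.sum_congr rfl (fun a _ => expand a), Finset.sum_ite]
            have h1 : ∑ a ∈ Finset.univ.filter (· ∈ I), μ a = t := by
              rw [ht]; congr 1; ext a; simp
            have h2 : ∑ a ∈ Finset.univ.filter (fun a => ¬ a ∈ I), μ a = 1 - t := by
              have hsp := Finset.sum_filter_add_sum_filter_not Finset.univ (· ∈ I) μ
              rw [hμ1] at hsp
              have h1' : ∑ a ∈ Finset.univ.filter (· ∈ I), μ a = t := h1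
              linarith
            rw [h1, ← Finset.sum_mul, h2]
          _ ≤ _ := Finset.sum_le_sum (fun a _ => Finset.sum_le_sum (fun b _ => hbound a b))
    linarith [hsplit, hconv.symm.le]
  -- conclude t = 1
  have ht1 : t = 1 := by nlinarith
  intro z hz
  by_contra hzI
  have hzI' : z ∉ I := fun h => hzI ((memI z).1 h)
  have : t ≤ 1 - μ z := by
    rw [ht]
    have : I ⊆ Finset.univ.erase z := by
      intro w hw
      exact Finset.mem_erase.2 ⟨fun hwz => hzI' (hwz ▸ hw), Finset.mem_univ w⟩
    calc ∑ w ∈ I, μ w ≤ ∑ w ∈ Finset.univ.erase z, μ w :=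
          Finset.sum_le_sum_of_subset_of_nonneg this (fun w _ _ => hμ0 w)
      _ = (∑ w : S, μ w) - μ z := by
          rw [Finset.sum_erase_eq_sub (Finset.mem_univ z)]
      _ = 1 - μ z := by rw [hμ1]
  linarith

end Aux


lemma wsum_le {ι : Type*} (s : Finset ι) (w T : ι → ℝ) (M : ℝ)
    (hw : ∀ i ∈ s, 0 ≤ w i) (hT : ∀ i ∈ s, T i ≤ M) :
    ∑ i ∈ s, w i * T i ≤ M * ∑ i ∈ s, w i := by
  rw [Finset.mul_sum]
  exact Finset.sum_le_sum fun i hi => by nlinarith [hw i hi, hT i hi]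

lemma avg_eq {ι : Type*} (s : Finset ι) (w T : ι → ℝ) (M : ℝ)
    (hw : ∀ i ∈ s, 0 ≤ w i) (hT : ∀ i ∈ s, T i ≤ M)
    (heq : M * ∑ i ∈ s, w i ≤ ∑ i ∈ s, w i * T i) :
    ∀ i ∈ s, 0 < w i → T i = M := by
  have hnn : ∀ i ∈ s, 0 ≤ w i * (M - T i) :=
    fun i hi => mul_nonneg (hw i hi) (sub_nonneg.2 (hT i hi))
  have hle : ∑ i ∈ s, w i * (M - T i) ≤ 0 := by
    have : ∑ i ∈ s, w i * (M - T i) = M * ∑ i ∈ s, w i - ∑ i ∈ s, w i * T i := by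
      rw [Finset.mul_sum, ← Finset.sum_sub_distrib]
      exact Finset.sum_congr rfl fun i _ => by ring
    linarith
  have hz := (Finset.sum_eq_zero_iff_of_nonneg hnn).1
    (le_antisymm hle (Finset.sum_nonneg hnn))
  intro i hi hwi
  have := hz i hi
  nlinarith


set_option maxHeartbeats 1000000 in
/-- Factorization of a convolution-idempotent probability `μ` on a finite semigroup
with completely simple support `K = 𝒮(μ)` and Rees decomposition `K = LGR` at an
idempotent `e ∈ K` (the product map `L × G × R → K` being bijective):
`μ = μ^L * ω_G * μ^R`.  Equivalently, if `Z` has law `μ`, its Rees coordinates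
`Z^L, Z^G, Z^R` are independent and `Z^G` is uniform on `G`.  Writing
`Lfin, Gfin, Rfin` for the Rees factors and expressing the marginals
`μ^L{f} = ∑_{g',h'} μ(f*g'*h')` and `μ^R{h} = ∑_{f',g'} μ(f'*g'*h)` (via the
bijectivity of the product map), this reads:
`μ(f*g*h) = μ^L{f} · (1/#G) · μ^R{h}` for all `f ∈ L`, `g ∈ G`, `h ∈ R`. -/
theorem stmt_12 {S : Type*} [Semigroup S] [Fintype S]
    (μ : S → ℝ) (hμ0 : ∀ s, 0 ≤ μ s) (hμ1 : ∑ s : S, μ s = 1)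
    (hidem : semigroupConv μ μ = μ)
    (e : S) (he : e * e = e) (heK : 0 < μ e)
    (Lfin Gfin Rfin : Finset S)
    (hL : Lfin = Finset.univ.filter
      (fun f : S => f * f = f ∧ ∃ z, 0 < μ z ∧ f = z * e))
    (hG : Gfin = Finset.univ.filter
      (fun x : S => ∃ z, 0 < μ z ∧ x = e * z * e))
    (hR : Rfin = Finset.univ.filter
      (fun h : S => h * h = h ∧ ∃ z, 0 < μ z ∧ h = e * z))
    (hbij : ∀ f ∈ Lfin, ∀ f' ∈ Lfin, ∀ g ∈ Gfin, ∀ g' ∈ Gfin,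
      ∀ h ∈ Rfin, ∀ h' ∈ Rfin, f * g * h = f' * g' * h' → f = f' ∧ g = g' ∧ h = h') :
    ∀ f ∈ Lfin, ∀ g ∈ Gfin, ∀ h ∈ Rfin,
      μ (f * g * h) =
        (∑ g' ∈ Gfin, ∑ h' ∈ Rfin, μ (f * g' * h')) * ((1 : ℝ) / Gfin.card) *
          (∑ f' ∈ Lfin, ∑ g' ∈ Gfin, μ (f' * g' * h)) := by
  have hmul : ∀ a b : S, 0 < μ a → 0 < μ b → 0 < μ (a * b) := conv_pos μ hμ0 hidem
  have hsimple : ∀ u : S, 0 < μ u → ∀ z : S, 0 < μ z →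
      ∃ a b : S, 0 < μ a ∧ 0 < μ b ∧ a * u * b = z := simpleK μ hμ0 hμ1 hidem
  -- G : membership characterization
  have hGmem : ∀ x : S, x ∈ Gfin ↔ (0 < μ x ∧ e * x * e = x) := by
    intro x
    rw [hG]; simp only [Finset.mem_filter, Finset.mem_univ, true_and]
    constructor
    · rintro ⟨z, hz, rfl⟩
      refine ⟨hmul _ _ (hmul _ _ heK hz) heK, ?_⟩
      calc e * (e * z * e) * e = ((e*e)*z*(e*e)) := by simp only [mul_assoc]
        _ = e * z * e := by rw [he]
    · rintro ⟨hx, hxe⟩; exact ⟨x, hx, hxe.symm⟩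
  -- identities for G elements
  have hGpos : ∀ x ∈ Gfin, 0 < μ x := fun x hx => ((hGmem x).1 hx).1
  have hGl : ∀ x ∈ Gfin, e * x = x := by
    intro x hx
    have hxe := ((hGmem x).1 hx).2
    have h2 : e * (e * x * e) = e * x * e := by
      calc e * (e * x * e) = (e*e) * x * e := by simp only [mul_assoc]
        _ = e * x * e := by rw [he]
    rw [hxe] at h2; exact h2
  have hGr : ∀ x ∈ Gfin, x * e = x := by
    intro x hx
    have hxe := ((hGmem x).1 hx).2
    have h2 : (e * x * e) * e = e * x * e := by
      rw [mul_assoc (e*x) e e, he]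
    rw [hxe] at h2; exact h2
  have hGmul : ∀ x ∈ Gfin, ∀ y ∈ Gfin, x * y ∈ Gfin := by
    intro x hx y hy
    refine (hGmem _).2 ⟨hmul _ _ (hGpos x hx) (hGpos y hy), ?_⟩
    calc e * (x * y) * e = (e * x) * (y * e) := by simp only [mul_assoc]
      _ = x * y := by rw [hGl x hx, hGr y hy]
  have heG : e ∈ Gfin := (hGmem e).2 ⟨heK, by rw [he, he]⟩
  -- inverses in G
  have hGinv : ∀ x ∈ Gfin, ∃ y ∈ Gfin, x * y = e ∧ y * x = e := by
    have hlinv : ∀ x ∈ Gfin, ∃ l ∈ Gfin, l * x = e := by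
      intro x hx
      obtain ⟨a, b, ha, hb, hab⟩ := hsimple x (hGpos x hx) e heK
      set A : S := e * a * e with hA
      set B : S := e * b * e with hB
      have hAG : A ∈ Gfin := (hGmem _).2 ⟨hmul _ _ (hmul _ _ heK ha) heK, by
        calc e * (e * a * e) * e = (e*e)*a*(e*e) := by simp only [mul_assoc]
          _ = e * a * e := by rw [he]⟩
      have hBG : B ∈ Gfin := (hGmem _).2 ⟨hmul _ _ (hmul _ _ heK hb) heK, by
        calc e * (e * b * e) * e = (e*e)*b*(e*e) := by simp only [mul_assoc]
          _ = e * b * e := by rw [he]⟩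
      set q : S := A * x with hq
      have hqG : q ∈ Gfin := hGmul A hAG x hx
      have hqB : q * B = e := by
        have hx1 : e * x = x := hGl x hx
        have hx2 : x * e = x := hGr x hx
        calc q * B = ((e * a * e) * x) * (e * b * e) := rfl
          _ = (e * a) * ((e * x) * ((e * b) * e)) := by simp only [mul_assoc]
          _ = (e * a) * (x * ((e * b) * e)) := by rw [hx1]
          _ = (e * a) * ((x * (e * b)) * e) := by rw [mul_assoc x (e*b) e]
          _ = (e * a) * (((x * e) * b) * e) := by rw [mul_assoc x e b]
          _ = (e * a) * ((x * b) * e) := by rw [hx2]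
          _ = e * ((a * (x * b)) * e) := by simp only [mul_assoc]
          _ = e * ((a * x * b) * e) := by rw [mul_assoc a x b]
          _ = e * (e * e) := by rw [hab]
          _ = e := by rw [he, he]
      -- left-mult by q is surjective on Gfin
      have hsurj : ∀ y ∈ Gfin, ∃ w, ∃ hw : w ∈ Gfin, q * w = y := by
        intro y hy
        refine ⟨B * y, hGmul B hBG y hy, ?_⟩
        calc q * (B * y) = (q * B) * y := (mul_assoc q B y).symm
          _ = e * y := by rw [hqB]
          _ = y := hGl y hy
      have hinj := Finset.inj_on_of_surj_on_of_card_le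
        (s := Gfin) (t := Gfin) (fun w _ => q * w)
        (fun w hw => hGmul q hqG w hw)
        (fun y hy => hsurj y hy) (le_refl _)
      have hBq : B * q = e := by
        have h1 : q * (B * q) = q * e := by
          calc q * (B * q) = (q * B) * q := (mul_assoc q B q).symm
            _ = e * q := by rw [hqB]
            _ = q := hGl q hqG
            _ = q * e := (hGr q hqG).symm
        exact hinj (hGmul B hBG q hqG) heG h1
      refine ⟨B * A, hGmul B hBG A hAG, ?_⟩
      calc (B * A) * x = B * (A * x) := mul_assoc B A x
        _ = e := hBq
    intro x hx
    obtain ⟨l, hl, hlx⟩ := hlinv x hx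
    obtain ⟨l', hl', hl'l⟩ := hlinv l hl
    have hxl' : x = l' := by
      calc x = e * x := (hGl x hx).symm
        _ = (l' * l) * x := by rw [hl'l]
        _ = l' * (l * x) := mul_assoc l' l x
        _ = l' * e := by rw [hlx]
        _ = l' := hGr l' hl'
    exact ⟨l, hl, by rw [hxl', hl'l], hlx⟩
  -- L and R memberships
  have hLmem : ∀ f : S, f ∈ Lfin ↔ (f * f = f ∧ ∃ z, 0 < μ z ∧ f = z * e) := by
    intro f; rw [hL]; simp only [Finset.mem_filter, Finset.mem_univ, true_and]
  have hRmem : ∀ h : S, h ∈ Rfin ↔ (h * h = h ∧ ∃ z, 0 < μ z ∧ h = e * z) := by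
    intro h; rw [hR]; simp only [Finset.mem_filter, Finset.mem_univ, true_and]
  have hLpos : ∀ f ∈ Lfin, 0 < μ f := by
    intro f hf
    obtain ⟨-, z, hz, rfl⟩ := (hLmem f).1 hf
    exact hmul _ _ hz heK
  have hRpos : ∀ h ∈ Rfin, 0 < μ h := by
    intro h hh
    obtain ⟨-, z, hz, rfl⟩ := (hRmem h).1 hh
    exact hmul _ _ heK hz
  have hLr : ∀ f ∈ Lfin, f * e = f := by
    intro f hf
    obtain ⟨-, z, hz, rfl⟩ := (hLmem f).1 hf
    rw [mul_assoc, he]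
  have hRl : ∀ h ∈ Rfin, e * h = h := by
    intro h hh
    obtain ⟨-, z, hz, rfl⟩ := (hRmem h).1 hh
    rw [← mul_assoc, he]
  have heL : e ∈ Lfin := (hLmem e).2 ⟨he, e, heK, he.symm⟩
  have heR : e ∈ Rfin := (hRmem e).2 ⟨he, e, heK, he.symm⟩
  have hRL : ∀ h ∈ Rfin, ∀ f ∈ Lfin, h * f ∈ Gfin := by
    intro h hh f hf
    refine (hGmem _).2 ⟨hmul _ _ (hRpos h hh) (hLpos f hf), ?_⟩
    calc e * (h * f) * e = (e * h) * (f * e) := by simp only [mul_assoc]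
      _ = h * f := by rw [hRl h hh, hLr f hf]
  -- surjectivity of the product map onto the support
  have hsurj : ∀ z : S, 0 < μ z →
      ∃ f ∈ Lfin, ∃ g ∈ Gfin, ∃ h ∈ Rfin, f * g * h = z := by
    intro z hz
    obtain ⟨a, b, ha, hb, hab⟩ := hsimple e heK z hz
    set γ : S := e * a * e with hγ
    set δ : S := e * b * e with hδ
    have hγG : γ ∈ Gfin := (hGmem _).2 ⟨hmul _ _ (hmul _ _ heK ha) heK, by
      calc e * (e * a * e) * e = (e*e)*a*(e*e) := by simp only [mul_assoc]
        _ = e * a * e := by rw [he]⟩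
    have hδG : δ ∈ Gfin := (hGmem _).2 ⟨hmul _ _ (hmul _ _ heK hb) heK, by
      calc e * (e * b * e) * e = (e*e)*b*(e*e) := by simp only [mul_assoc]
        _ = e * b * e := by rw [he]⟩
    obtain ⟨γ', hγ'G, hγγ', hγ'γ⟩ := hGinv γ hγG
    obtain ⟨δ', hδ'G, hδδ', hδ'δ⟩ := hGinv δ hδG
    set f : S := (a * e) * γ' with hf
    set h : S := δ' * (e * b) with hh
    have h1 : γ' * (a * e) = e := by
      calc γ' * (a * e) = (γ' * a) * e := (mul_assoc γ' a e).symm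
        _ = ((γ' * e) * a) * e := by rw [hGr γ' hγ'G]
        _ = (γ' * (e * a)) * e := by rw [mul_assoc γ' e a]
        _ = γ' * ((e * a) * e) := mul_assoc γ' (e*a) e
        _ = γ' * γ := rfl
        _ = e := hγ'γ
    have h2 : (e * b) * δ' = e := by
      calc (e * b) * δ' = (e * b) * (e * δ') := by rw [hGl δ' hδ'G]
        _ = ((e * b) * e) * δ' := (mul_assoc (e*b) e δ').symm
        _ = δ * δ' := rfl
        _ = e := hδδ'
    have hfpos : 0 < μ f := hmul _ _ (hmul _ _ ha heK) (hGpos γ' hγ'G)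
    have hhpos : 0 < μ h := hmul _ _ (hGpos δ' hδ'G) (hmul _ _ heK hb)
    have hff : f * f = f := by
      calc f * f = (a*e) * ((γ' * (a*e)) * γ') := by rw [hf]; simp only [mul_assoc]
        _ = (a*e) * (e * γ') := by rw [h1]
        _ = (a*e) * γ' := by rw [hGl γ' hγ'G]
    have hfe : f * e = f := by
      calc f * e = (a*e) * (γ' * e) := by rw [hf, mul_assoc]
        _ = (a*e) * γ' := by rw [hGr γ' hγ'G]
    have hfL : f ∈ Lfin := (hLmem f).2 ⟨hff, f, hfpos, hfe.symm⟩
    have hhh : h * h = h := by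
      calc h * h = δ' * (((e*b) * δ') * (e*b)) := by rw [hh]; simp only [mul_assoc]
        _ = δ' * (e * (e*b)) := by rw [h2]
        _ = δ' * ((e*e) * b) := by rw [← mul_assoc e e b]
        _ = δ' * (e*b) := by rw [he]
    have heh : e * h = h := by
      calc e * h = (e * δ') * (e * b) := by rw [hh, ← mul_assoc]
        _ = δ' * (e * b) := by rw [hGl δ' hδ'G]
    have hhR : h ∈ Rfin := (hRmem h).2 ⟨hhh, h, hhpos, heh.symm⟩
    refine ⟨f, hfL, γ * δ, hGmul γ hγG δ hδG, h, hhR, ?_⟩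
    have hfγ : f * γ = a * e := by
      calc f * γ = (a*e) * (γ' * γ) := by rw [hf]; simp only [mul_assoc]
        _ = (a*e) * e := by rw [hγ'γ]
        _ = a * (e*e) := mul_assoc a e e
        _ = a * e := by rw [he]
    have hδh : δ * h = e * b := by
      calc δ * h = (δ * δ') * (e * b) := (mul_assoc δ δ' (e*b)).symm
        _ = e * (e * b) := by rw [hδδ']
        _ = (e * e) * b := (mul_assoc e e b).symm
        _ = e * b := by rw [he]
    calc f * (γ * δ) * h = ((f * γ) * δ) * h := by rw [← mul_assoc f γ δ]
      _ = (f * γ) * (δ * h) := mul_assoc (f*γ) δ h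
      _ = (a * e) * (e * b) := by rw [hfγ, hδh]
      _ = ((a * e) * e) * b := (mul_assoc (a*e) e b).symm
      _ = (a * (e * e)) * b := by rw [mul_assoc a e e]
      _ = a * e * b := by rw [he]
      _ = z := hab
  -- change of variables: sums over the support re-indexed by Rees coordinates
  have hCOV : ∀ F : S → ℝ, ∑ u : S, μ u * F u =
      ∑ f1 ∈ Lfin, ∑ g1 ∈ Gfin, ∑ h1 ∈ Rfin, μ (f1*g1*h1) * F (f1*g1*h1) := by
    intro F
    have hinjT : ∀ t1 ∈ Lfin ×ˢ Gfin ×ˢ Rfin, ∀ t2 ∈ Lfin ×ˢ Gfin ×ˢ Rfin,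
        (fun t : S × S × S => t.1 * t.2.1 * t.2.2) t1 =
        (fun t : S × S × S => t.1 * t.2.1 * t.2.2) t2 → t1 = t2 := by
      rintro ⟨a1, b1, c1⟩ ht1 ⟨a2, b2, c2⟩ ht2 heq
      simp only [Finset.mem_product] at ht1 ht2
      obtain ⟨e1, e2, e3⟩ := hbij _ ht1.1 _ ht2.1 _ ht1.2.1 _ ht2.2.1 _ ht1.2.2 _ ht2.2.2 heq
      rw [e1, e2, e3]
    have himg : ∑ z ∈ (Lfin ×ˢ Gfin ×ˢ Rfin).image (fun t : S × S × S => t.1 * t.2.1 * t.2.2),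
        μ z * F z = ∑ t ∈ Lfin ×ˢ Gfin ×ˢ Rfin,
          μ (t.1 * t.2.1 * t.2.2) * F (t.1 * t.2.1 * t.2.2) := Finset.sum_image hinjT
    have hsub : ∑ z ∈ (Lfin ×ˢ Gfin ×ˢ Rfin).image (fun t : S × S × S => t.1 * t.2.1 * t.2.2),
        μ z * F z = ∑ z : S, μ z * F z := by
      refine Finset.sum_subset (Finset.subset_univ _) ?_
      intro z _ hz
      have hz0 : μ z = 0 := by
        by_contra hne
        have hpos : 0 < μ z := lt_of_le_of_ne (hμ0 z) (Ne.symm hne)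
        obtain ⟨f, hf, g, hg, h, hh, hfgh⟩ := hsurj z hpos
        exact hz (Finset.mem_image.2 ⟨(f, g, h),
          Finset.mem_product.2 ⟨hf, Finset.mem_product.2 ⟨hg, hh⟩⟩, hfgh⟩)
      rw [hz0, zero_mul]
    rw [← hsub, himg, Finset.sum_product]
    exact Finset.sum_congr rfl fun f1 _ => Finset.sum_product _ _ _
  -- total mass in coordinates
  have htot : ∑ f1 ∈ Lfin, ∑ g1 ∈ Gfin, ∑ h1 ∈ Rfin, μ (f1*g1*h1) = 1 := by
    have := hCOV (fun _ => 1)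
    simp only [mul_one] at this
    rw [← this, hμ1]
  -- the convolution identity in Rees coordinates
  have hcond : ∀ f ∈ Lfin, ∀ g ∈ Gfin, ∀ h ∈ Rfin, ∀ f1 ∈ Lfin, ∀ g1 ∈ Gfin, ∀ h1 ∈ Rfin,
      ∀ f2 ∈ Lfin, ∀ g2 ∈ Gfin, ∀ h2 ∈ Rfin,
      ((f1*g1*h1)*(f2*g2*h2) = f*g*h ↔ (f1 = f ∧ g1*(h1*f2)*g2 = g ∧ h2 = h)) := by
    intro f hf g hg h hh f1 hf1 g1 hg1 h1 hh1 f2 hf2 g2 hg2 h2 hh2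
    have hassoc : f1*(g1*(h1*f2)*g2)*h2 = (f1*g1*h1)*(f2*g2*h2) := by
      simp only [mul_assoc]
    have hmid : g1*(h1*f2)*g2 ∈ Gfin :=
      hGmul _ (hGmul g1 hg1 _ (hRL h1 hh1 f2 hf2)) g2 hg2
    constructor
    · intro hq
      exact hbij f1 hf1 f hf _ hmid g hg h2 hh2 h hh (hassoc.trans hq)
    · rintro ⟨rfl, hmid2, rfl⟩
      rw [← hmid2]
      exact hassoc.symm
  have hstar : ∀ f ∈ Lfin, ∀ g ∈ Gfin, ∀ h ∈ Rfin,
      μ (f*g*h) = ∑ g1 ∈ Gfin, ∑ h1 ∈ Rfin, μ (f*g1*h1) *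
        (∑ f2 ∈ Lfin, ∑ g2 ∈ Gfin, μ (f2*g2*h) *
          (if g1 * (h1*f2) * g2 = g then (1:ℝ) else 0)) := by
    intro f hf g hg h hh
    have h0 : μ (f*g*h) = ∑ u : S, μ u *
        (∑ v : S, μ v * (if u * v = f*g*h then (1:ℝ) else 0)) := by
      conv_lhs => rw [← hidem]
      show (∑ u : S, ∑ v : S, if u * v = f*g*h then μ u * μ v else 0) = _
      refine Finset.sum_congr rfl fun u _ => ?_
      rw [Finset.mul_sum]
      refine Finset.sum_congr rfl fun v _ => ?_
      by_cases hc : u*v = f*g*h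
      · rw [if_pos hc, if_pos hc, mul_one]
      · rw [if_neg hc, if_neg hc, mul_zero, mul_zero]
    have hinner : ∀ w : S, (∑ v : S, μ v * (if w * v = f*g*h then (1:ℝ) else 0)) =
        ∑ f2 ∈ Lfin, ∑ g2 ∈ Gfin, ∑ h2 ∈ Rfin,
          μ (f2*g2*h2) * (if w * (f2*g2*h2) = f*g*h then (1:ℝ) else 0) :=
      fun w => hCOV (fun v => if w * v = f*g*h then (1:ℝ) else 0)
    calc μ (f*g*h)
        = ∑ f1 ∈ Lfin, ∑ g1 ∈ Gfin, ∑ h1 ∈ Rfin, μ (f1*g1*h1) *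
            (∑ f2 ∈ Lfin, ∑ g2 ∈ Gfin, ∑ h2 ∈ Rfin, μ (f2*g2*h2) *
              (if (f1*g1*h1) * (f2*g2*h2) = f*g*h then (1:ℝ) else 0)) := by
          rw [h0, hCOV (fun u => ∑ v : S, μ v * (if u * v = f*g*h then (1:ℝ) else 0))]
          exact Finset.sum_congr rfl fun f1 _ => Finset.sum_congr rfl fun g1 _ =>
            Finset.sum_congr rfl fun h1 _ => by rw [hinner]
      _ = ∑ f1 ∈ Lfin, (if f1 = f then (∑ g1 ∈ Gfin, ∑ h1 ∈ Rfin, μ (f1*g1*h1) *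
            (∑ f2 ∈ Lfin, ∑ g2 ∈ Gfin, μ (f2*g2*h) *
              (if g1 * (h1*f2) * g2 = g then (1:ℝ) else 0))) else 0) := by
          refine Finset.sum_congr rfl fun f1 hf1 => ?_
          by_cases hf1f : f1 = f
          · rw [if_pos hf1f]
            refine Finset.sum_congr rfl fun g1 hg1 => Finset.sum_congr rfl fun h1 hh1 => ?_
            congr 1
            refine Finset.sum_congr rfl fun f2 hf2 => Finset.sum_congr rfl fun g2 hg2 => ?_
            have hrw : ∀ h2 ∈ Rfin, μ (f2*g2*h2) *
                (if (f1*g1*h1)*(f2*g2*h2) = f*g*h then (1:ℝ) else 0)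
                = if h2 = h then (μ (f2*g2*h2) *
                    (if g1*(h1*f2)*g2 = g then (1:ℝ) else 0)) else 0 := by
              intro h2 hh2
              by_cases hc : (f1*g1*h1)*(f2*g2*h2) = f*g*h
              · obtain ⟨u1, u2, u3⟩ := (hcond f hf g hg h hh f1 hf1 g1 hg1 h1 hh1
                  f2 hf2 g2 hg2 h2 hh2).1 hc
                rw [if_pos hc, if_pos u3, if_pos u2]
              · rw [if_neg hc]
                by_cases hh2h : h2 = h
                · rw [if_pos hh2h]
                  by_cases hmid : g1*(h1*f2)*g2 = g
                  · exact absurd ((hcond f hf g hg h hh f1 hf1 g1 hg1 h1 hh1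
                      f2 hf2 g2 hg2 h2 hh2).2 ⟨hf1f, hmid, hh2h⟩) hc
                  · simp only [if_neg hmid, mul_zero]
                · simp only [if_neg hh2h, mul_zero]
            rw [Finset.sum_congr rfl hrw, Finset.sum_ite_eq' Rfin h
              (fun h2 => μ (f2*g2*h2) * (if g1*(h1*f2)*g2 = g then (1:ℝ) else 0)),
              if_pos hh]
          · rw [if_neg hf1f]
            refine Finset.sum_eq_zero fun g1 hg1 => Finset.sum_eq_zero fun h1 hh1 => ?_
            refine mul_eq_zero_of_right _ (Finset.sum_eq_zero fun f2 hf2 =>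
              Finset.sum_eq_zero fun g2 hg2 => Finset.sum_eq_zero fun h2 hh2 => ?_)
            have hnc : ¬((f1*g1*h1)*(f2*g2*h2) = f*g*h) := fun hc =>
              hf1f ((hcond f hf g hg h hh f1 hf1 g1 hg1 h1 hh1
                f2 hf2 g2 hg2 h2 hh2).1 hc).1
            rw [if_neg hnc, mul_zero]
      _ = _ := by
          rw [Finset.sum_ite_eq' Lfin f, if_pos hf]
  -- marginals
  set aL : S → ℝ := fun f' => ∑ g' ∈ Gfin, ∑ h' ∈ Rfin, μ (f' * g' * h') with haL
  set cR : S → ℝ := fun h' => ∑ f' ∈ Lfin, ∑ g' ∈ Gfin, μ (f' * g' * h') with hcR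
  have haLdef : ∀ x : S, aL x = ∑ g' ∈ Gfin, ∑ h' ∈ Rfin, μ (x * g' * h') :=
    fun x => by rw [haL]
  have hcRdef : ∀ x : S, cR x = ∑ f' ∈ Lfin, ∑ g' ∈ Gfin, μ (f' * g' * x) :=
    fun x => by rw [hcR]
  have haLpos : ∀ f ∈ Lfin, 0 < aL f := by
    intro f hf
    rw [haLdef]
    calc (0:ℝ) < μ (f*e*e) := hmul _ _ (hmul _ _ (hLpos f hf) heK) heK
      _ ≤ ∑ h' ∈ Rfin, μ (f*e*h') :=
          Finset.single_le_sum (f := fun h' => μ (f*e*h')) (fun h' _ => hμ0 _) heR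
      _ ≤ ∑ g' ∈ Gfin, ∑ h' ∈ Rfin, μ (f*g'*h') :=
          Finset.single_le_sum (f := fun g' => ∑ h' ∈ Rfin, μ (f*g'*h'))
            (fun g' _ => Finset.sum_nonneg fun h' _ => hμ0 _) heG
  have hcRpos : ∀ h ∈ Rfin, 0 < cR h := by
    intro h hh
    rw [hcRdef]
    calc (0:ℝ) < μ (e*e*h) := hmul _ _ (hmul _ _ heK heK) (hRpos h hh)
      _ ≤ ∑ g' ∈ Gfin, μ (e*g'*h) :=
          Finset.single_le_sum (f := fun g' => μ (e*g'*h)) (fun g' _ => hμ0 _) heG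
      _ ≤ ∑ f' ∈ Lfin, ∑ g' ∈ Gfin, μ (f'*g'*h) :=
          Finset.single_le_sum (f := fun f' => ∑ g' ∈ Gfin, μ (f'*g'*h))
            (fun f' _ => Finset.sum_nonneg fun g' _ => hμ0 _) heL
  have haLtot : ∑ f' ∈ Lfin, aL f' = 1 := by
    calc ∑ f' ∈ Lfin, aL f'
        = ∑ f' ∈ Lfin, ∑ g' ∈ Gfin, ∑ h' ∈ Rfin, μ (f' * g' * h') :=
          Finset.sum_congr rfl fun x _ => haLdef x
      _ = 1 := htot
  have hcRtot : ∑ h' ∈ Rfin, cR h' = 1 := by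
    calc ∑ h' ∈ Rfin, cR h'
        = ∑ h' ∈ Rfin, ∑ f' ∈ Lfin, ∑ g' ∈ Gfin, μ (f' * g' * h') :=
          Finset.sum_congr rfl fun x _ => hcRdef x
      _ = ∑ f' ∈ Lfin, ∑ h' ∈ Rfin, ∑ g' ∈ Gfin, μ (f' * g' * h') := Finset.sum_comm
      _ = ∑ f' ∈ Lfin, ∑ g' ∈ Gfin, ∑ h' ∈ Rfin, μ (f' * g' * h') :=
          Finset.sum_congr rfl fun f' _ => Finset.sum_comm
      _ = 1 := htot
  -- marginal factorization
  have hM : ∀ f ∈ Lfin, ∀ h ∈ Rfin, ∑ g ∈ Gfin, μ (f*g*h) = aL f * cR h := by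
    intro f hf h hh
    calc ∑ g ∈ Gfin, μ (f*g*h)
        = ∑ g ∈ Gfin, ∑ g1 ∈ Gfin, ∑ h1 ∈ Rfin, μ (f*g1*h1) *
            (∑ f2 ∈ Lfin, ∑ g2 ∈ Gfin, μ (f2*g2*h) *
              (if g1 * (h1*f2) * g2 = g then (1:ℝ) else 0)) :=
          Finset.sum_congr rfl fun g hg => hstar f hf g hg h hh
      _ = ∑ g1 ∈ Gfin, ∑ g ∈ Gfin, ∑ h1 ∈ Rfin, μ (f*g1*h1) *
            (∑ f2 ∈ Lfin, ∑ g2 ∈ Gfin, μ (f2*g2*h) *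
              (if g1 * (h1*f2) * g2 = g then (1:ℝ) else 0)) := Finset.sum_comm
      _ = ∑ g1 ∈ Gfin, ∑ h1 ∈ Rfin, ∑ g ∈ Gfin, μ (f*g1*h1) *
            (∑ f2 ∈ Lfin, ∑ g2 ∈ Gfin, μ (f2*g2*h) *
              (if g1 * (h1*f2) * g2 = g then (1:ℝ) else 0)) :=
          Finset.sum_congr rfl fun g1 _ => Finset.sum_comm
      _ = ∑ g1 ∈ Gfin, ∑ h1 ∈ Rfin, μ (f*g1*h1) *
            (∑ g ∈ Gfin, ∑ f2 ∈ Lfin, ∑ g2 ∈ Gfin, μ (f2*g2*h) *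
              (if g1 * (h1*f2) * g2 = g then (1:ℝ) else 0)) :=
          Finset.sum_congr rfl fun g1 _ => Finset.sum_congr rfl fun h1 _ =>
            (Finset.mul_sum _ _ _).symm
      _ = ∑ g1 ∈ Gfin, ∑ h1 ∈ Rfin, μ (f*g1*h1) *
            (∑ f2 ∈ Lfin, ∑ g2 ∈ Gfin, μ (f2*g2*h) *
              (∑ g ∈ Gfin, if g1 * (h1*f2) * g2 = g then (1:ℝ) else 0)) := by
          refine Finset.sum_congr rfl fun g1 _ => Finset.sum_congr rfl fun h1 _ => ?_
          congr 1
          calc ∑ g ∈ Gfin, ∑ f2 ∈ Lfin, ∑ g2 ∈ Gfin, μ (f2*g2*h) *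
                (if g1 * (h1*f2) * g2 = g then (1:ℝ) else 0)
              = ∑ f2 ∈ Lfin, ∑ g ∈ Gfin, ∑ g2 ∈ Gfin, μ (f2*g2*h) *
                (if g1 * (h1*f2) * g2 = g then (1:ℝ) else 0) := Finset.sum_comm
            _ = ∑ f2 ∈ Lfin, ∑ g2 ∈ Gfin, ∑ g ∈ Gfin, μ (f2*g2*h) *
                (if g1 * (h1*f2) * g2 = g then (1:ℝ) else 0) :=
                Finset.sum_congr rfl fun f2 _ => Finset.sum_comm
            _ = _ := Finset.sum_congr rfl fun f2 _ => Finset.sum_congr rfl fun g2 _ =>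
                (Finset.mul_sum _ _ _).symm
      _ = ∑ g1 ∈ Gfin, ∑ h1 ∈ Rfin, μ (f*g1*h1) *
            (∑ f2 ∈ Lfin, ∑ g2 ∈ Gfin, μ (f2*g2*h) * 1) := by
          refine Finset.sum_congr rfl fun g1 hg1 => Finset.sum_congr rfl fun h1 hh1 => ?_
          congr 1
          refine Finset.sum_congr rfl fun f2 hf2 => Finset.sum_congr rfl fun g2 hg2 => ?_
          congr 1
          rw [Finset.sum_ite_eq Gfin (g1 * (h1*f2) * g2) (fun _ => (1:ℝ)),
            if_pos (hGmul _ (hGmul g1 hg1 _ (hRL h1 hh1 f2 hf2)) g2 hg2)]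
      _ = (∑ g1 ∈ Gfin, ∑ h1 ∈ Rfin, μ (f*g1*h1)) *
            (∑ f2 ∈ Lfin, ∑ g2 ∈ Gfin, μ (f2*g2*h)) := by
          simp only [mul_one]
          rw [Finset.sum_mul]
          refine Finset.sum_congr rfl fun g1 _ => ?_
          rw [Finset.sum_mul]
      _ = aL f * cR h := by rw [haLdef, hcRdef]
  -- normalized conditional densities
  set r : S → S → S → ℝ := fun f' h' g' => μ (f' * g' * h') / (aL f' * cR h') with hrdef0
  have hrdef : ∀ f' h' g' : S, r f' h' g' = μ (f' * g' * h') / (aL f' * cR h') :=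
    fun f' h' g' => by rw [hrdef0]
  have hrpos : ∀ f ∈ Lfin, ∀ h ∈ Rfin, ∀ g ∈ Gfin, 0 < r f h g := by
    intro f hf h hh g hg
    rw [hrdef]
    exact div_pos (hmul _ _ (hmul _ _ (hLpos f hf) (hGpos g hg)) (hRpos h hh))
      (mul_pos (haLpos f hf) (hcRpos h hh))
  have hrsum : ∀ f ∈ Lfin, ∀ h ∈ Rfin, ∑ g ∈ Gfin, r f h g = 1 := by
    intro f hf h hh
    have hne : aL f * cR h ≠ 0 := ne_of_gt (mul_pos (haLpos f hf) (hcRpos h hh))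
    calc ∑ g ∈ Gfin, r f h g = (∑ g ∈ Gfin, μ (f*g*h)) / (aL f * cR h) := by
          rw [Finset.sum_div]
      _ = (aL f * cR h) / (aL f * cR h) := by rw [hM f hf h hh]
      _ = 1 := div_self hne
  have hsub : ∀ f' ∈ Lfin, ∀ h' ∈ Rfin, ∀ g' : S,
      μ (f' * g' * h') = aL f' * cR h' * r f' h' g' := by
    intro f' hf' h' hh' g'
    have hne : aL f' * cR h' ≠ 0 := ne_of_gt (mul_pos (haLpos f' hf') (hcRpos h' hh'))
    rw [hrdef, mul_comm (aL f' * cR h'), div_mul_cancel₀ _ hne]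
  -- normalized convolution identity
  have hrstar : ∀ f ∈ Lfin, ∀ h ∈ Rfin, ∀ g ∈ Gfin,
      r f h g = ∑ g1 ∈ Gfin, ∑ h1 ∈ Rfin, (cR h1 * r f h1 g1) *
        (∑ f2 ∈ Lfin, ∑ g2 ∈ Gfin, (aL f2 * r f2 h g2) *
          (if g1 * (h1*f2) * g2 = g then (1:ℝ) else 0)) := by
    intro f hf h hh g hg
    have hAne : aL f ≠ 0 := ne_of_gt (haLpos f hf)
    have hCne : cR h ≠ 0 := ne_of_gt (hcRpos h hh)
    rw [hrdef, hstar f hf g hg h hh, div_eq_iff (mul_ne_zero hAne hCne), Finset.sum_mul]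
    refine Finset.sum_congr rfl fun g1 hg1 => ?_
    rw [Finset.sum_mul]
    refine Finset.sum_congr rfl fun h1 hh1 => ?_
    rw [hsub f hf h1 hh1 g1]
    have hinner : ∑ f2 ∈ Lfin, ∑ g2 ∈ Gfin, μ (f2*g2*h) *
        (if g1 * (h1*f2) * g2 = g then (1:ℝ) else 0)
        = cR h * ∑ f2 ∈ Lfin, ∑ g2 ∈ Gfin, (aL f2 * r f2 h g2) *
          (if g1 * (h1*f2) * g2 = g then (1:ℝ) else 0) := by
      rw [Finset.mul_sum]
      refine Finset.sum_congr rfl fun f2 hf2 => ?_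
      rw [Finset.mul_sum]
      refine Finset.sum_congr rfl fun g2 hg2 => ?_
      rw [hsub f2 hf2 h hh g2]; ring
    rw [hinner]; ring
  -- cancellation in G
  have hGcancel : ∀ q ∈ Gfin, ∀ x ∈ Gfin, ∀ y ∈ Gfin, q * x = q * y → x = y := by
    intro q hq x hx y hy hxy
    obtain ⟨q', hq', hqq', hq'q⟩ := hGinv q hq
    calc x = e * x := (hGl x hx).symm
      _ = (q' * q) * x := by rw [hq'q]
      _ = q' * (q * x) := mul_assoc _ _ _
      _ = q' * (q * y) := by rw [hxy]
      _ = (q' * q) * y := (mul_assoc _ _ _).symm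
      _ = y := by rw [hq'q, hGl y hy]
  -- evaluation of the single-solution sums
  have hval : ∀ q ∈ Gfin, ∀ g0 : S, ∀ g2 ∈ Gfin, q * g2 = g0 → ∀ v : S → ℝ,
      ∑ g2' ∈ Gfin, v g2' * (if q * g2' = g0 then (1:ℝ) else 0) = v g2 := by
    intro q hq g0 g2 hg2 hqg2 v
    rw [Finset.sum_eq_single_of_mem g2 hg2]
    · rw [if_pos hqg2, mul_one]
    · intro g2' hg2' hne
      have hnc : ¬(q * g2' = g0) := fun hc =>
        hne (hGcancel q hq g2' hg2' g2 hg2 (hc.trans hqg2.symm))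
      rw [if_neg hnc, mul_zero]
  -- the maximum of the normalized densities
  have hTne : (Lfin ×ˢ Rfin ×ˢ Gfin).Nonempty :=
    ⟨(e, e, e), Finset.mem_product.2 ⟨heL, Finset.mem_product.2 ⟨heR, heG⟩⟩⟩
  set M : ℝ := (Lfin ×ˢ Rfin ×ˢ Gfin).sup' hTne (fun t => r t.1 t.2.1 t.2.2) with hMdef
  have hMub : ∀ f ∈ Lfin, ∀ h ∈ Rfin, ∀ g ∈ Gfin, r f h g ≤ M := by
    intro f hf h hh g hg
    exact Finset.le_sup' (f := fun t : S × S × S => r t.1 t.2.1 t.2.2)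
      (b := (f, h, g)) (Finset.mem_product.2 ⟨hf, Finset.mem_product.2 ⟨hh, hg⟩⟩)
  have hMpos : 0 < M := lt_of_lt_of_le (hrpos e heL e heR e heG) (hMub e heL e heR e heG)
  have hMatt : ∃ t ∈ Lfin ×ˢ Rfin ×ˢ Gfin, r t.1 t.2.1 t.2.2 = M := by
    obtain ⟨t, ht, hteq⟩ := Finset.exists_mem_eq_sup' hTne
      (fun t : S × S × S => r t.1 t.2.1 t.2.2)
    exact ⟨t, ht, hteq.symm⟩
  -- inner sums are bounded by M
  have hVle : ∀ q ∈ Gfin, ∀ g0 ∈ Gfin, ∀ f2 ∈ Lfin, ∀ h ∈ Rfin,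
      ∑ g2 ∈ Gfin, r f2 h g2 * (if q * g2 = g0 then (1:ℝ) else 0) ≤ M := by
    intro q hq g0 hg0 f2 hf2 h hh
    obtain ⟨q', hq', hqq', hq'q⟩ := hGinv q hq
    have hsol : q * (q' * g0) = g0 := by
      rw [← mul_assoc, hqq', hGl g0 hg0]
    rw [hval q hq g0 (q'*g0) (hGmul q' hq' g0 hg0) hsol]
    exact hMub f2 hf2 h hh _ (hGmul q' hq' g0 hg0)
  have hTle : ∀ f ∈ Lfin, ∀ h ∈ Rfin, ∀ g0 ∈ Gfin, ∀ h1 ∈ Rfin, ∀ f2 ∈ Lfin,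
      (∑ g1 ∈ Gfin, r f h1 g1 * (∑ g2 ∈ Gfin, r f2 h g2 *
        (if g1 * (h1*f2) * g2 = g0 then (1:ℝ) else 0))) ≤ M := by
    intro f hf h hh g0 hg0 h1 hh1 f2 hf2
    have hb := wsum_le Gfin (fun g1 => r f h1 g1)
      (fun g1 => ∑ g2 ∈ Gfin, r f2 h g2 * (if g1 * (h1*f2) * g2 = g0 then (1:ℝ) else 0)) M
      (fun g1 hg1 => le_of_lt (hrpos f hf h1 hh1 g1 hg1))
      (fun g1 hg1 => hVle (g1 * (h1*f2))
        (hGmul g1 hg1 _ (hRL h1 hh1 f2 hf2)) g0 hg0 f2 hf2 h hh)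
    rw [hrsum f hf h1 hh1, mul_one] at hb
    exact hb
  -- propagation of the maximum
  have hkey : ∀ f ∈ Lfin, ∀ h ∈ Rfin, ∀ g0 ∈ Gfin, r f h g0 = M →
      ∀ f2 ∈ Lfin, ∀ g2 ∈ Gfin, r f2 h g2 = M := by
    intro f hf h hh g0 hg0 hreq f2 hf2 g2 hg2
    -- reorganized identity
    have hre : M = ∑ h1 ∈ Rfin, ∑ f2' ∈ Lfin, (cR h1 * aL f2') *
        (∑ g1 ∈ Gfin, r f h1 g1 * (∑ g2' ∈ Gfin, r f2' h g2' *
          (if g1 * (h1 * f2') * g2' = g0 then (1:ℝ) else 0))) := by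
      rw [← hreq, hrstar f hf h hh g0 hg0]
      calc ∑ g1 ∈ Gfin, ∑ h1 ∈ Rfin, (cR h1 * r f h1 g1) *
            (∑ f2' ∈ Lfin, ∑ g2' ∈ Gfin, (aL f2' * r f2' h g2') *
              (if g1 * (h1*f2') * g2' = g0 then (1:ℝ) else 0))
          = ∑ h1 ∈ Rfin, ∑ g1 ∈ Gfin, (cR h1 * r f h1 g1) *
            (∑ f2' ∈ Lfin, ∑ g2' ∈ Gfin, (aL f2' * r f2' h g2') *
              (if g1 * (h1*f2') * g2' = g0 then (1:ℝ) else 0)) := Finset.sum_comm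
       _ = ∑ h1 ∈ Rfin, ∑ g1 ∈ Gfin, ∑ f2' ∈ Lfin, (cR h1 * r f h1 g1) *
            (∑ g2' ∈ Gfin, (aL f2' * r f2' h g2') *
              (if g1 * (h1*f2') * g2' = g0 then (1:ℝ) else 0)) :=
            Finset.sum_congr rfl fun h1 _ => Finset.sum_congr rfl fun g1 _ =>
              Finset.mul_sum _ _ _
       _ = ∑ h1 ∈ Rfin, ∑ f2' ∈ Lfin, ∑ g1 ∈ Gfin, (cR h1 * r f h1 g1) *
            (∑ g2' ∈ Gfin, (aL f2' * r f2' h g2') *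
              (if g1 * (h1*f2') * g2' = g0 then (1:ℝ) else 0)) :=
            Finset.sum_congr rfl fun h1 _ => Finset.sum_comm
       _ = ∑ h1 ∈ Rfin, ∑ f2' ∈ Lfin, (cR h1 * aL f2') *
            (∑ g1 ∈ Gfin, r f h1 g1 * (∑ g2' ∈ Gfin, r f2' h g2' *
              (if g1 * (h1 * f2') * g2' = g0 then (1:ℝ) else 0))) := by
            refine Finset.sum_congr rfl fun h1 _ => Finset.sum_congr rfl fun f2' _ => ?_
            rw [Finset.mul_sum]
            refine Finset.sum_congr rfl fun g1 _ => ?_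
            have hingr : ∑ g2' ∈ Gfin, (aL f2' * r f2' h g2') *
                (if g1 * (h1 * f2') * g2' = g0 then (1:ℝ) else 0)
                = aL f2' * ∑ g2' ∈ Gfin, r f2' h g2' *
                  (if g1 * (h1 * f2') * g2' = g0 then (1:ℝ) else 0) := by
              rw [Finset.mul_sum]
              exact Finset.sum_congr rfl fun g2' _ => by ring
            rw [hingr]; ring
    -- as a sum over the product finset
    have hre2 : M = ∑ t ∈ Rfin ×ˢ Lfin, (cR t.1 * aL t.2) *
        (∑ g1 ∈ Gfin, r f t.1 g1 * (∑ g2' ∈ Gfin, r t.2 h g2' *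
          (if g1 * (t.1 * t.2) * g2' = g0 then (1:ℝ) else 0))) := by
      rw [hre, Finset.sum_product]
    have hwsum : ∑ t ∈ Rfin ×ˢ Lfin, (cR t.1 * aL t.2) = 1 := by
      rw [Finset.sum_product]
      calc ∑ h1 ∈ Rfin, ∑ f2' ∈ Lfin, cR h1 * aL f2'
          = ∑ h1 ∈ Rfin, cR h1 * ∑ f2' ∈ Lfin, aL f2' :=
            Finset.sum_congr rfl fun h1 _ => (Finset.mul_sum _ _ _).symm
        _ = ∑ h1 ∈ Rfin, cR h1 := by rw [haLtot]; simp only [mul_one]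
        _ = 1 := hcRtot
    have havg := avg_eq (Rfin ×ˢ Lfin) (fun t => cR t.1 * aL t.2)
      (fun t => ∑ g1 ∈ Gfin, r f t.1 g1 * (∑ g2' ∈ Gfin, r t.2 h g2' *
        (if g1 * (t.1 * t.2) * g2' = g0 then (1:ℝ) else 0))) M
      (fun t ht => by
        rw [Finset.mem_product] at ht
        exact le_of_lt (mul_pos (hcRpos _ ht.1) (haLpos _ ht.2)))
      (fun t ht => by
        rw [Finset.mem_product] at ht
        exact hTle f hf h hh g0 hg0 t.1 ht.1 t.2 ht.2)
      (by rw [hwsum, mul_one, ← hre2])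
    have hTeq : (∑ g1 ∈ Gfin, r f e g1 * (∑ g2' ∈ Gfin, r f2 h g2' *
        (if g1 * (e * f2) * g2' = g0 then (1:ℝ) else 0))) = M := by
      have := havg (e, f2) (Finset.mem_product.2 ⟨heR, hf2⟩)
        (mul_pos (hcRpos e heR) (haLpos f2 hf2))
      exact this
    -- second averaging over g1
    have havg2 := avg_eq Gfin (fun g1 => r f e g1)
      (fun g1 => ∑ g2' ∈ Gfin, r f2 h g2' *
        (if g1 * (e * f2) * g2' = g0 then (1:ℝ) else 0)) M
      (fun g1 hg1 => le_of_lt (hrpos f hf e heR g1 hg1))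
      (fun g1 hg1 => hVle (g1 * (e * f2))
        (hGmul g1 hg1 _ (hRL e heR f2 hf2)) g0 hg0 f2 hf2 h hh)
      (by rw [hrsum f hf e heR, mul_one, hTeq])
    -- choose the right g1
    have hsG : e * f2 ∈ Gfin := hRL e heR f2 hf2
    have hsg2G : (e * f2) * g2 ∈ Gfin := hGmul _ hsG g2 hg2
    obtain ⟨y, hyG, hy1, hy2⟩ := hGinv _ hsg2G
    have hg1G : g0 * y ∈ Gfin := hGmul g0 hg0 y hyG
    have hsolve : (g0 * y) * (e * f2) * g2 = g0 := by
      calc (g0 * y) * (e * f2) * g2 = g0 * (y * ((e * f2) * g2)) := by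
            simp only [mul_assoc]
        _ = g0 * e := by rw [hy2]
        _ = g0 := hGr g0 hg0
    have hVeq : (∑ g2' ∈ Gfin, r f2 h g2' *
        (if (g0 * y) * (e * f2) * g2' = g0 then (1:ℝ) else 0)) = M :=
      havg2 (g0 * y) hg1G (hrpos f hf e heR _ hg1G)
    rw [hval ((g0 * y) * (e * f2)) (hGmul _ hg1G _ hsG) g0 g2 hg2 hsolve] at hVeq
    exact hVeq
  -- conclude : M = 1 / #G and every value equals M
  obtain ⟨⟨fm, hm, gm⟩, htm, hteq⟩ := hMatt
  rw [Finset.mem_product] at htm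
  obtain ⟨hfmL, htm2⟩ := htm
  rw [Finset.mem_product] at htm2
  obtain ⟨hhmR, hgmG⟩ := htm2
  have hallm : ∀ f2 ∈ Lfin, ∀ g2 ∈ Gfin, r f2 hm g2 = M :=
    hkey fm hfmL hm hhmR gm hgmG hteq
  have hMcard : (Gfin.card : ℝ) * M = 1 := by
    have hs := hrsum e heL hm hhmR
    rw [Finset.sum_congr rfl (fun g hg => hallm e heL g hg), Finset.sum_const,
      nsmul_eq_mul] at hs
    exact hs
  have hcardpos : (0:ℝ) < (Gfin.card : ℝ) := by
    have : 0 < Gfin.card := Finset.card_pos.2 ⟨e, heG⟩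
    exact_mod_cast this
  intro f hf g hg h hh
  have hex : ∃ g' ∈ Gfin, r f h g' = M := by
    by_contra hcon
    push_neg at hcon
    have hlt : ∀ g' ∈ Gfin, r f h g' < M := fun g' hg' =>
      lt_of_le_of_ne (hMub f hf h hh g' hg') (hcon g' hg')
    have hstrict := Finset.sum_lt_sum_of_nonempty ⟨e, heG⟩ hlt
    rw [hrsum f hf h hh, Finset.sum_const, nsmul_eq_mul] at hstrict
    linarith
  obtain ⟨g', hg', hg'eq⟩ := hex
  have hfin : r f h g = M := hkey f hf h hh g' hg' hg'eq f hf g hg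
  have hμval : μ (f * g * h) = aL f * cR h * M := by
    rw [hsub f hf h hh g, hfin]
  have hMval : M = 1 / (Gfin.card : ℝ) := eq_one_div_of_mul_eq_one_right hMcard
  rw [← haLdef f, ← hcRdef h, hμval, hMval]
  ring
end

section
/- Let S be a subsemigroup of the full transformation semigroup on a finite set V and m = min{#(gV) : g ∈ S}. Call a set F ⊆ V an F-clique if every pair x ≠ y in F satisfies gx ≠ gy for all g ∈ S, and F is maximal with this property. Then for g ∈ S, the image gV is an F-clique if and only if #(gV) = m. -/
open scoped Classical

/-- Let `S` be a subsemigroup of the full transformation semigroup on a finite set `V`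
(generated by the support of a probability `μ`), and
`m = min{#(gV) : g ∈ S}`.  A set `F ⊆ V` is an F-clique if every pair `x ≠ y` in `F`
is a deadlock (`g x ≠ g y` for all `g ∈ S`) and `F` is maximal with this property.
Then for `g ∈ S`, the image `gV` is an F-clique iff `#(gV) = m`. -/
theorem stmt_14 {V : Type*} [Fintype V] [Nonempty V]
    (μ : (V → V) → ℝ) (hμ0 : ∀ f, 0 ≤ μ f) (hμ1 : ∑ f : V → V, μ f = 1)
    (S : Set (V → V))
    (hSsupp : {f | 0 < μ f} ⊆ S)
    (hSclosed : ∀ f ∈ S, ∀ g ∈ S, f ∘ g ∈ S)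
    (hSmin : ∀ T : Set (V → V), {f | 0 < μ f} ⊆ T →
      (∀ f ∈ T, ∀ g ∈ T, f ∘ g ∈ T) → S ⊆ T) :
    ∀ g ∈ S,
      ((Finset.univ.image g).card =
          sInf {n : ℕ | ∃ g ∈ S, (Finset.univ.image g).card = n} ↔
        ((∀ x ∈ Set.range g, ∀ y ∈ Set.range g, x ≠ y → ∀ f ∈ S, f x ≠ f y) ∧
          (∀ x : V, x ∉ Set.range g → ∃ y ∈ Set.range g, ∃ f ∈ S, f x = f y))) := by
  intro g hg
  set m := sInf {n : ℕ | ∃ g ∈ S, (Finset.univ.image g).card = n} with hm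
  have hgmem : (Finset.univ.image g).card ∈
      {n : ℕ | ∃ g ∈ S, (Finset.univ.image g).card = n} := ⟨g, hg, rfl⟩
  have hne : {n : ℕ | ∃ g ∈ S, (Finset.univ.image g).card = n}.Nonempty := ⟨_, hgmem⟩
  have hmle : m ≤ (Finset.univ.image g).card := Nat.sInf_le hgmem
  have hrange : ∀ x, x ∈ Set.range g ↔ x ∈ Finset.univ.image g := by
    intro x
    simp [Finset.mem_image, Set.mem_range, eq_comm]
  constructor
  · intro hcard
    constructor
    · -- deadlocks
      intro x hx y hy hxy f hf hfxy
      have hfg : f ∘ g ∈ S := hSclosed f hf g hg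
      have hle : m ≤ (Finset.univ.image (f ∘ g)).card := Nat.sInf_le ⟨f ∘ g, hfg, rfl⟩
      have him : Finset.univ.image (f ∘ g) = (Finset.univ.image g).image f := by
        rw [Finset.image_image]
      have hlt : ((Finset.univ.image g).image f).card < (Finset.univ.image g).card := by
        have hle' := Finset.card_image_le (s := Finset.univ.image g) (f := f)
        rcases lt_or_eq_of_le hle' with h | h
        · exact h
        · exfalso
          have hinj : Set.InjOn f (Finset.univ.image g : Set V) :=
            Finset.card_image_iff.mp h
          exact hxy (hinj ((hrange x).mp hx) ((hrange y).mp hy) hfxy)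
      rw [him] at hle
      omega
    · -- maximality
      intro x hx
      have hgg : g ∘ g ∈ S := hSclosed g hg g hg
      have hsub : Finset.univ.image (g ∘ g) ⊆ Finset.univ.image g := by
        intro z hz
        simp only [Finset.mem_image, Function.comp] at hz ⊢
        obtain ⟨a, _, ha⟩ := hz
        exact ⟨g a, Finset.mem_univ _, ha⟩
      have hle : m ≤ (Finset.univ.image (g ∘ g)).card := Nat.sInf_le ⟨g ∘ g, hgg, rfl⟩
      have heq : Finset.univ.image (g ∘ g) = Finset.univ.image g :=
        Finset.eq_of_subset_of_card_le hsub (by omega)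
      have hgx : g x ∈ Finset.univ.image (g ∘ g) := by
        rw [heq]; exact (hrange (g x)).mp ⟨x, rfl⟩
      simp only [Finset.mem_image, Function.comp] at hgx
      obtain ⟨a, _, ha⟩ := hgx
      exact ⟨g a, ⟨a, rfl⟩, g, hg, ha.symm⟩
  · rintro ⟨hdl, -⟩
    obtain ⟨h, hhS, hhcard⟩ := Nat.sInf_mem hne
    have hinj : Set.InjOn h (Finset.univ.image g : Set V) := by
      intro x hx y hy hxy
      by_contra hne'
      exact hdl x ((hrange x).mpr hx) y ((hrange y).mpr hy) hne' h hhS hxy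
    have h1 : ((Finset.univ.image g).image h).card = (Finset.univ.image g).card :=
      Finset.card_image_of_injOn hinj
    have h2 : (Finset.univ.image g).image h ⊆ Finset.univ.image h :=
      Finset.image_subset_image (Finset.subset_univ _)
    have := Finset.card_le_card h2
    omega
end

section
/- Let (Ω, ℱ, P) be a probability space and 𝒜, ℬ, 𝒞 sub-σ-fields of ℱ. Suppose 𝒜 ⊆ ℬ ∨ 𝒞 up to null sets, and 𝒜 ∨ ℬ is independent of 𝒞. Then 𝒜 ⊆ ℬ up to null sets. -/
/-!
For `A ∈ 𝒜`, independence of `𝒜 ∨ ℬ` from `𝒞` makes `P[1_A | ℬ]` a version of `P[1_A | ℬ ∨ 𝒞]`: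
on a rectangle `B ∩ C` both integrate to `P(A ∩ B) P(C)`, and such rectangles form a π-system
generating `ℬ ∨ 𝒞`. Since `A` is `ℬ ∨ 𝒞`-measurable up to null sets, `1_A = P[1_A | ℬ ∨ 𝒞]`
almost surely, so `1_A` agrees a.s. with the `ℬ`-measurable `P[1_A | ℬ]`, and `A` agrees a.s.
with the `ℬ`-set where the latter equals `1`.
-/

open scoped symmDiff

open MeasureTheory ProbabilityTheory MeasurableSpace Set

theorem IsPiSystem.image2_inter {α : Type*} {S T : Set (Set α)} (hS : IsPiSystem S)
    (hT : IsPiSystem T) : IsPiSystem (image2 (· ∩ ·) S T) := by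
  rintro _ ⟨s₁, hs₁, t₁, ht₁, rfl⟩ _ ⟨s₂, hs₂, t₂, ht₂, rfl⟩ hne
  have hst : s₁ ∩ t₁ ∩ (s₂ ∩ t₂) = s₁ ∩ s₂ ∩ (t₁ ∩ t₂) := inter_inter_inter_comm _ _ _ _
  rw [hst] at hne ⊢
  exact ⟨_, hS _ hs₁ _ hs₂ hne.left, _, hT _ ht₁ _ ht₂ hne.right, rfl⟩

theorem MeasurableSpace.sup_eq_generateFrom_image2_inter {α : Type*}
    (m₁ m₂ : MeasurableSpace α) :
    m₁ ⊔ m₂ = generateFrom (image2 (· ∩ ·) {s | MeasurableSet[m₁] s} {t | MeasurableSet[m₂] t}) := by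
  refine le_antisymm (sup_le ?_ ?_) (generateFrom_le ?_)
  · exact fun s hs ↦ measurableSet_generateFrom ⟨s, hs, univ, .univ, inter_univ s⟩
  · exact fun t ht ↦ measurableSet_generateFrom ⟨univ, .univ, t, ht, univ_inter t⟩
  · rintro _ ⟨s, hs, t, ht, rfl⟩
    exact (le_sup_left (b := m₂) s hs).inter (le_sup_right (a := m₁) t ht)

theorem ProbabilityTheory.Indep.setIntegral_inter_eq_smul {Ω E : Type*} [NormedAddCommGroup E]
    [NormedSpace ℝ E] {m₁ m₂ mΩ : MeasurableSpace Ω} {μ : Measure Ω}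
    (hle₁ : m₁ ≤ mΩ) (hle₂ : m₂ ≤ mΩ) (hind : Indep m₁ m₂ μ) {f : Ω → E}
    (hf : StronglyMeasurable[m₁] f) {s t : Set Ω} (hs : MeasurableSet[m₁] s)
    (ht : MeasurableSet[m₂] t) :
    ∫ ω in s ∩ t, f ω ∂μ = μ.real t • ∫ ω in s, f ω ∂μ := by
  rw [inter_comm, ← setIntegral_indicator (hle₁ s hs), ← integral_indicator (hle₁ s hs)]
  exact Indep.setIntegral_eq_smul (m𝓧 := m₁) (X := id) hle₂
    (by simpa [comap_id] using hind.symm) (aemeasurable_id'' μ hle₁) ht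
    (hf.indicator hs).aestronglyMeasurable

theorem MeasureTheory.condExp_sup_ae_eq_condExp_of_indep {Ω E : Type*} [NormedAddCommGroup E]
    [NormedSpace ℝ E] [CompleteSpace E] {m₁ m₂ m₃ mΩ : MeasurableSpace Ω} {μ : Measure Ω}
    [IsFiniteMeasure μ] (hle₁ : m₁ ≤ mΩ) (hle₂ : m₂ ≤ mΩ) (hle₃ : m₃ ≤ mΩ)
    (hind : Indep (m₁ ⊔ m₂) m₃ μ) {f : Ω → E} (hf : StronglyMeasurable[m₁] f)
    (hfi : Integrable f μ) :
    μ[f | m₂ ⊔ m₃] =ᵐ[μ] μ[f | m₂] := by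
  have hle₂₃ : m₂ ⊔ m₃ ≤ mΩ := sup_le hle₂ hle₃
  have hsetIntegral : ∀ s, MeasurableSet[m₂ ⊔ m₃] s →
      ∫ x in s, (μ[f | m₂]) x ∂μ = ∫ x in s, f x ∂μ := by
    intro s hs
    induction s, hs using induction_on_inter (sup_eq_generateFrom_image2_inter m₂ m₃)
      ((@isPiSystem_measurableSet Ω m₂).image2_inter (@isPiSystem_measurableSet Ω m₃)) with
    | empty => simp
    | basic _ hst =>
      obtain ⟨s, hs, t, ht, rfl⟩ := hst
      rw [Indep.setIntegral_inter_eq_smul hle₂ hle₃ (indep_of_indep_of_le_left hind le_sup_right)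
          stronglyMeasurable_condExp hs ht,
        Indep.setIntegral_inter_eq_smul (sup_le hle₁ hle₂) hle₃ hind
          (hf.mono le_sup_left) (le_sup_right (a := m₁) s hs) ht,
        setIntegral_condExp hle₂ hfi hs]
    | compl t ht ih =>
      rw [setIntegral_compl (hle₂₃ t ht) integrable_condExp, setIntegral_compl (hle₂₃ t ht) hfi,
        integral_condExp hle₂, ih]
    | iUnion s hdisj hs ih =>
      rw [integral_iUnion (fun i ↦ hle₂₃ _ (hs i)) hdisj integrable_condExp.integrableOn,
        integral_iUnion (fun i ↦ hle₂₃ _ (hs i)) hdisj hfi.integrableOn]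
      exact tsum_congr ih
  exact (ae_eq_condExp_of_forall_setIntegral_eq hle₂₃ hfi
    (fun _ _ _ ↦ integrable_condExp.integrableOn) (fun s hs _ ↦ hsetIntegral s hs)
    (stronglyMeasurable_condExp.mono (le_sup_left : m₂ ≤ m₂ ⊔ m₃)).aestronglyMeasurable).symm

theorem MeasureTheory.exists_measurableSet_ae_eq_of_indicator_ae_eq {α β : Type*}
    {m mα : MeasurableSpace α} {μ : Measure α} [Zero β] [One β] [NeZero (1 : β)]
    [MeasurableSpace β] [MeasurableSingletonClass β] {s : Set α} {g : α → β}
    (hg : Measurable[m] g) (h : s.indicator 1 =ᵐ[μ] g) :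
    ∃ t, MeasurableSet[m] t ∧ s =ᵐ[μ] t := by
  refine ⟨g ⁻¹' {1}, hg (measurableSet_singleton 1), h.mono fun x hx ↦ ?_⟩
  change (x ∈ s) = (g x = 1)
  by_cases hxs : x ∈ s <;> simp [hxs, ← hx]

/-- Let `(Ω, ℱ, P)` be a probability space and `𝒜, ℬ, 𝒞` sub-σ-fields of `ℱ`.
If `𝒜 ⊆ ℬ ∨ 𝒞` up to null sets and `𝒜 ∨ ℬ` is independent of `𝒞`, then `𝒜 ⊆ ℬ`
up to null sets. -/
theorem stmt_18 {Ω : Type*} [ℱ : MeasurableSpace Ω]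
    (P : MeasureTheory.Measure Ω) [MeasureTheory.IsProbabilityMeasure P]
    (𝒜 ℬ 𝒞 : MeasurableSpace Ω)
    (h𝒜 : 𝒜 ≤ ℱ) (hℬ : ℬ ≤ ℱ) (h𝒞 : 𝒞 ≤ ℱ)
    (hsub : ∀ A : Set Ω, @MeasurableSet Ω 𝒜 A →
      ∃ B : Set Ω, @MeasurableSet Ω (ℬ ⊔ 𝒞) B ∧ P (A ∆ B) = 0)
    (hindep : ProbabilityTheory.Indep (𝒜 ⊔ ℬ) 𝒞 P) :
    ∀ A : Set Ω, @MeasurableSet Ω 𝒜 A →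
      ∃ B : Set Ω, @MeasurableSet Ω ℬ B ∧ P (A ∆ B) = 0 := by
  -- otherwise instance search picks up the sub-σ-fields in the context
  let _ : MeasurableSpace Ω := ℱ
  intro A hA
  obtain ⟨B₀, hB₀, hAB₀⟩ := hsub A hA
  have hA_ind : A.indicator (1 : Ω → ℝ) =ᵐ[P] B₀.indicator 1 :=
    indicator_ae_eq_of_ae_eq_set (measure_symmDiff_eq_zero_iff.1 hAB₀)
  have hA_int : Integrable (A.indicator (1 : Ω → ℝ)) P :=
    (integrable_const 1).indicator (h𝒜 A hA)
  have hA_sup : P[A.indicator 1 | ℬ ⊔ 𝒞] =ᵐ[P] A.indicator (1 : Ω → ℝ) :=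
    condExp_of_aestronglyMeasurable' (sup_le hℬ h𝒞)
      ⟨_, stronglyMeasurable_one.indicator hB₀, hA_ind⟩ hA_int
  have hA_ℬ : A.indicator 1 =ᵐ[P] P[A.indicator (1 : Ω → ℝ) | ℬ] :=
    hA_sup.symm.trans <| condExp_sup_ae_eq_condExp_of_indep h𝒜 hℬ h𝒞 hindep
      (stronglyMeasurable_one.indicator hA) hA_int
  obtain ⟨B, hB, hAB⟩ :=
    exists_measurableSet_ae_eq_of_indicator_ae_eq stronglyMeasurable_condExp.measurable hA_ℬ
  exact ⟨B, hB, measure_symmDiff_eq_zero_iff.2 hAB⟩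
end
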